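/- arXiv:2112.01004 — 5 statements merged into one kernel-verified Lean document; each statement's English description precedes it below -/
import Mathlib

section
/- There exists ε > 0 such that for every u ∈ l²_+(Z,C²) with ‖u‖_{l²} < ε there exists z ∈ C such that u − Φ_+[z] ∈ H_c[z], where H_c[z] := { v ∈ l²(Z,C²) : ⟨v, i DΦ_+[z]w⟩ = 0 for all w ∈ C } and DΦ_+[z] is the R-linear Fréchet derivative of z ↦ Φ_+[z]. -/
noncomputable section

open scoped ENNReal NNReal BigOperators
open Complex

/-- `ℂ²` with the Euclidean (Hermitian) inner product. -/
abbrev C2 : Type := EuclideanSpace ℂ (Fin 2)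

/-- The Hilbert space `ℓ²(ℤ, ℂ²)`. -/
abbrev QWS : Type := lp (fun _ : ℤ => C2) 2

namespace QW

/-- The Japanese bracket `⟨x⟩ = (1+|x|²)^(1/2)`. -/
def jap (x : ℤ) : ℝ := Real.sqrt (1 + (x : ℝ) ^ 2)

/-- The real inner product `⟨u,v⟩ = Re (u,v)` on `ℓ²(ℤ,ℂ²)`. -/
def rinner (u v : QWS) : ℝ := (inner ℂ u v : ℂ).re

/-- The real inner product `⟨u,v⟩_{ℂ²} = Re (u,v)_{ℂ²}`. -/
def rinner2 (u v : C2) : ℝ := (inner ℂ u v : ℂ).re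

/-- The bounded operator on `ℂ²` associated with a `2×2` complex matrix. -/
def matCLM (A : Matrix (Fin 2) (Fin 2) ℂ) : C2 →L[ℂ] C2 := Matrix.toEuclideanCLM (𝕜 := ℂ) A

/-- The phase operator `e^{i g(⟨w,γw⟩) γ}` of the nonlinear coin. -/
def phase (γ : C2 →L[ℂ] C2) (g : ℝ → ℝ) (w : C2) : C2 →L[ℂ] C2 :=
  NormedSpace.exp (((g (rinner2 w (γ w)) : ℝ) : ℂ) • Complex.I • γ)

/-- The nonlinear coin `N(w) = e^{i g(⟨w,γw⟩)γ} w` acting on `ℂ²`. -/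
def Ncoin (γ : C2 →L[ℂ] C2) (g : ℝ → ℝ) (w : C2) : C2 := phase γ g w w

/-- A quantum-walk setting: shift `S`, coin `C`, evolution `U = S C`. -/
structure Setting where
  /-- the coin, a map `ℤ → U(2)` -/
  Cm : ℤ → Matrix (Fin 2) (Fin 2) ℂ
  hCm : ∀ x, Cm x ∈ Matrix.unitaryGroup (Fin 2) ℂ
  /-- the shift operator -/
  S : QWS →L[ℂ] QWS
  hS : ∀ (u : QWS) (x : ℤ), S u x 0 = u (x - 1) 0 ∧ S u x 1 = u (x + 1) 1
  /-- the coin operator -/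
  Chat : QWS →L[ℂ] QWS
  hChat : ∀ (u : QWS) (x : ℤ), Chat u x = matCLM (Cm x) (u x)
  /-- the evolution `U = S C` -/
  U : QWS →L[ℂ] QWS
  hU : U = S.comp Chat

/-- Assumption 1: the coin converges to `C_∞` in `l^{1,1}`. -/
structure Assumption1 (Q : Setting) where
  /-- `α_∞` -/
  α : ℂ
  /-- `β_∞` -/
  β : ℂ
  hα0 : 0 < ‖α‖
  hα1 : ‖α‖ < 1
  hmod : ‖α‖ ^ 2 + ‖β‖ ^ 2 = 1
  /-- the limit coin `C_∞` -/
  Cinf : Matrix (Fin 2) (Fin 2) ℂ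
  hCinf : Cinf = !![β, (starRingEnd ℂ) α; -α, (starRingEnd ℂ) β]
  hsum : Summable fun x : ℤ => jap x * ‖matCLM (Q.Cm x - Cinf)‖

/-- The nonlinearity data: a self-adjoint `γ ∈ L(ℂ²)` and `g ∈ C^∞(ℝ,ℝ)`, `g(0) = 0`,
together with the induced (pointwise acting) nonlinear coin operator on `ℓ²(ℤ,ℂ²)`. -/
structure NLSetting where
  /-- `γ` -/
  γ : C2 →L[ℂ] C2
  hγ : IsSelfAdjoint γ
  /-- `g` -/
  g : ℝ → ℝ
  hg : ContDiff ℝ (⊤ : ℕ∞) g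
  hg0 : g 0 = 0
  /-- the nonlinear coin operator `N` on `ℓ²(ℤ,ℂ²)` -/
  Nop : QWS → QWS
  hNop : ∀ (u : QWS) (x : ℤ), Nop u x = Ncoin γ g (u x)

/-- The double-step nonlinear evolution `𝒰(u) = U N(U N(u))`. -/
def calU (Q : Setting) (NL : NLSetting) : QWS → QWS := fun u => Q.U (NL.Nop (Q.U (NL.Nop u)))

/-- `μ` belongs to the discrete spectrum: it is an isolated point of the spectrum and an
eigenvalue of finite multiplicity. -/
def InDiscSpec (U : QWS →L[ℂ] QWS) (μ : ℂ) : Prop :=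
  μ ∈ spectrum ℂ U ∧ (∃ ε > 0, spectrum ℂ U ∩ Metric.ball μ ε ⊆ {μ}) ∧
    Module.End.HasEigenvalue (↑U : QWS →ₗ[ℂ] QWS) μ ∧
    FiniteDimensional ℂ (Module.End.eigenspace (↑U : QWS →ₗ[ℂ] QWS) μ)

/-- `U` is generic: at the four band-edge points of the essential spectrum, the generalized
(pointwise) eigenvalue equation `Uψ = μψ` has no nonzero bounded solution. -/
def Generic (Cm : ℤ → Matrix (Fin 2) (Fin 2) ℂ) (α : ℂ) : Prop :=
  ∀ μ : ℂ, ‖μ‖ = 1 →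
    (μ.re = Real.sqrt (1 - ‖α‖ ^ 2) ∨ μ.re = -Real.sqrt (1 - ‖α‖ ^ 2)) →
    ∀ ψ : ℤ → C2, (∃ M, ∀ x, ‖ψ x‖ ≤ M) →
      (∀ x : ℤ, matCLM (Cm (x - 1)) (ψ (x - 1)) 0 = μ * ψ x 0 ∧
                matCLM (Cm (x + 1)) (ψ (x + 1)) 1 = μ * ψ x 1) →
      ψ = 0

end QW

namespace QW

/-- Assumption 2: `g'(0) = g''(0) = 0`. -/
def Assumption2 (NL : NLSetting) : Prop :=
  deriv NL.g 0 = 0 ∧ deriv (deriv NL.g) 0 = 0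

/-- The zig-zag (chiral) transform `Z`, the pair of eigenvalues `±e^{iλ}` of `U` and the
normalized eigenvector `φ_+ = P_+φ/‖P_+φ‖` of `U²` on `ℓ²_+`. -/
structure ChiralSetting (Q : Setting) where
  /-- the zig-zag transform -/
  Zop : QWS →L[ℂ] QWS
  hZ : ∀ (u : QWS) (x : ℤ), Zop u x = ((-1 : ℂ) ^ x) • u x
  /-- the eigenvalue phase `λ` -/
  lam : ℝ
  /-- an eigenfunction of `U` for `e^{iλ}` -/
  φ : QWS
  hφ0 : φ ≠ 0
  hφeig : Q.U φ = Complex.exp ((lam : ℂ) * Complex.I) • φ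
  /-- the normalized `P_+`-projected eigenvector -/
  φp : QWS
  hφpnorm : ‖φp‖ = 1
  hφpplus : Zop φp = φp
  hφpP : ∃ c : ℂ, φp = c • (φ + Zop φ)
  hφpeig : Q.U (Q.U φp) = Complex.exp ((2 * lam : ℂ) * Complex.I) • φp

/-- Assumption 3: `U` is generic and has exactly the two discrete eigenvalues `±e^{iλ}`. -/
structure Assumption3 (Q : Setting) (A1 : Assumption1 Q) (Ch : ChiralSetting Q) : Prop where
  hgen : Generic Q.Cm A1.α
  htwo : ∀ μ : ℂ, Module.End.HasEigenvalue (↑Q.U : QWS →ₗ[ℂ] QWS) μ →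
    μ = Complex.exp ((Ch.lam : ℂ) * Complex.I) ∨ μ = -Complex.exp ((Ch.lam : ℂ) * Complex.I)

/-- The projection `P_c = 1 − (·,φ_+)φ_+` onto the orthogonal complement of `φ_+`. -/
def Pc (φp : QWS) (u : QWS) : QWS := u - (inner ℂ φp u : ℂ) • φp

/-- The family `z ↦ Φ_+[z]`, `z ↦ Λ_+[z]` of small nonlinear bound states of the double-step
evolution `𝒰`, bifurcating from `φ_+` (together with its ℝ-linear Fréchet derivative `DΦ_+`):
`𝒰(Φ_+[z]) = e^{iΛ_+[z]}Φ_+[z]`, `Φ_+[e^{iθ}z] = e^{iθ}Φ_+[z]`, `Λ_+[e^{iθ}z] = Λ_+[z]`,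
and `Φ_+[z] = zφ_+ + O(|z|³)`. -/
structure PlusBoundStates (Q : Setting) (NL : NLSetting) (Ch : ChiralSetting Q) where
  /-- the size of the neighbourhood of `0` on which the family is defined -/
  δ : ℝ
  hδ : 0 < δ
  /-- the nonlinear frequency `Λ_+` -/
  Λp : ℂ → ℝ
  /-- the nonlinear bound state `Φ_+` -/
  Φp : ℂ → QWS
  /-- the ℝ-linear Fréchet derivative `DΦ_+` -/
  DΦp : ℂ → (ℂ →L[ℝ] QWS)
  hsmooth : ContDiffOn ℝ (⊤ : ℕ∞) Φp (Metric.ball (0 : ℂ) δ)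
  hderiv : ∀ z ∈ Metric.ball (0 : ℂ) δ, HasFDerivAt Φp (DΦp z) z
  hplus : ∀ z ∈ Metric.ball (0 : ℂ) δ, Ch.Zop (Φp z) = Φp z
  heig : ∀ z ∈ Metric.ball (0 : ℂ) δ,
    calU Q NL (Φp z) = Complex.exp ((Λp z : ℂ) * Complex.I) • Φp z
  hequiv : ∀ z ∈ Metric.ball (0 : ℂ) δ, ∀ θ : ℝ,
    Φp (Complex.exp ((θ : ℂ) * Complex.I) * z) = Complex.exp ((θ : ℂ) * Complex.I) • Φp z
  hgauge : ∀ z ∈ Metric.ball (0 : ℂ) δ, ∀ θ : ℝ,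
    Λp (Complex.exp ((θ : ℂ) * Complex.I) * z) = Λp z
  /-- the constant in the bifurcation estimates -/
  Cb : ℝ
  hclose : ∀ z ∈ Metric.ball (0 : ℂ) δ, ‖Φp z - z • Ch.φp‖ ≤ Cb * ‖z‖ ^ 3
  hDclose : ∀ z ∈ Metric.ball (0 : ℂ) δ, ∀ w : ℂ,
    ‖DΦp z w - w • Ch.φp‖ ≤ Cb * ‖z‖ ^ 2 * ‖w‖

/-- Membership in the continuous subspace `H_c[z]`:
`⟨ξ, i DΦ_+[z]w⟩ = 0` for all `w ∈ ℂ`. -/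
def memHc (DΦp : ℂ → (ℂ →L[ℝ] QWS)) (z : ℂ) (ξ : QWS) : Prop :=
  ∀ w : ℂ, rinner ξ (Complex.I • DΦp z w) = 0

end QW

open QW Metric in
set_option maxHeartbeats 2000000 in
/-- **Lemma (modulation decomposition).**
There exists `ε > 0` such that every `u ∈ ℓ²_+(ℤ,ℂ²)` with `‖u‖ < ε` can be written as
`u = Φ_+[z] + ξ` with `ξ ∈ H_c[z]`, i.e. `⟨u − Φ_+[z], i DΦ_+[z]w⟩ = 0` for all `w ∈ ℂ`. -/
theorem modulation_decomposition
    (Q : QW.Setting) (A1 : QW.Assumption1 Q) (NL : QW.NLSetting)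
    (Ch : QW.ChiralSetting Q) (B : QW.PlusBoundStates Q NL Ch) :
    ∃ ε > 0, ∀ u : QWS, Ch.Zop u = u → ‖u‖ < ε →
      ∃ z : ℂ, ‖z‖ < B.δ ∧ QW.memHc B.DΦp z (u - B.Φp z) := by
    classical
  have hδ := B.hδ
  have h0mem : (0:ℂ) ∈ ball (0:ℂ) B.δ := mem_ball_self hδ
  -- basic facts at z = 0
  have hΦ0 : B.Φp 0 = 0 := by
    have h := B.hclose 0 h0mem
    simp only [map_zero, zero_smul, sub_zero, ne_eq, OfNat.ofNat_ne_zero,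
      not_false_eq_true, zero_pow, mul_zero, norm_zero] at h
    exact norm_le_zero_iff.mp h
  have hT0 : ∀ w : ℂ, B.DΦp 0 w = w • Ch.φp := by
    intro w
    have h := B.hDclose 0 h0mem w
    simp only [map_zero, ne_eq, OfNat.ofNat_ne_zero, not_false_eq_true, zero_pow,
      mul_zero, zero_mul, norm_zero] at h
    exact sub_eq_zero.mp (norm_le_zero_iff.mp h)
  -- smoothness at 0
  have hΦca : ContDiffAt ℝ (⊤ : ℕ∞) B.Φp 0 := B.hsmooth.contDiffAt (isOpen_ball.mem_nhds h0mem)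
  have hΦstrict : HasStrictFDerivAt B.Φp (B.DΦp 0) 0 := by
    have h := hΦca.hasStrictFDerivAt (by simp)
    rwa [(B.hderiv 0 h0mem).fderiv] at h
  have hev : B.DΦp =ᶠ[nhds (0:ℂ)] fderiv ℝ B.Φp :=
    Filter.eventuallyEq_of_mem (isOpen_ball.mem_nhds h0mem)
      (fun z hz => ((B.hderiv z hz).fderiv).symm)
  have hDca : ContDiffAt ℝ 1 B.DΦp 0 :=
    (hΦca.fderiv_right (by exact WithTop.coe_le_coe.mpr le_top)).congr_of_eventuallyEq hev
  have hDstrict : HasStrictFDerivAt B.DΦp (fderiv ℝ B.DΦp 0) 0 :=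
    hDca.hasStrictFDerivAt one_ne_zero
  -- the modulation functional
  set φ := Ch.φp with hφdef
  set F : ℂ × QWS → ℂ := fun p =>
    (((inner ℂ (p.2 - B.Φp p.1) (I • B.DΦp p.1 1) : ℂ).re : ℝ) : ℂ) +
      I • (((inner ℂ (p.2 - B.Φp p.1) (I • B.DΦp p.1 I) : ℂ).re : ℝ) : ℂ) with hFdef
  -- the explicit derivative and its inverse
  let c1 : QWS →L[ℝ] ℝ := Complex.reCLM.comp ((innerSL ℂ (I • φ)).restrictScalars ℝ)
  let c2 : QWS →L[ℝ] ℝ := Complex.reCLM.comp ((innerSL ℂ φ).restrictScalars ℝ)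
  let cC : QWS →L[ℝ] ℂ := Complex.ofRealCLM.comp c1 - I • (Complex.ofRealCLM.comp c2)
  let mI : ℂ →L[ℝ] ℂ := I • (ContinuousLinearMap.id ℝ ℂ)
  let Dfst : (ℂ × QWS) →L[ℝ] ℂ :=
    mI.comp (ContinuousLinearMap.fst ℝ ℂ QWS) + cC.comp (ContinuousLinearMap.snd ℝ ℂ QWS)
  let fwd : (ℂ × QWS) →L[ℝ] (ℂ × QWS) := Dfst.prod (ContinuousLinearMap.snd ℝ ℂ QWS)
  let bwd : (ℂ × QWS) →L[ℝ] (ℂ × QWS) :=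
    (((-I : ℂ) • (ContinuousLinearMap.id ℝ ℂ)).comp
      ((ContinuousLinearMap.fst ℝ ℂ QWS) - cC.comp (ContinuousLinearMap.snd ℝ ℂ QWS))).prod
      (ContinuousLinearMap.snd ℝ ℂ QWS)
  have hleft : Function.LeftInverse bwd fwd := by
    intro p
    simp only [fwd, bwd, Dfst, mI, ContinuousLinearMap.prod_apply,
      ContinuousLinearMap.comp_apply, ContinuousLinearMap.add_apply,
      ContinuousLinearMap.sub_apply, ContinuousLinearMap.smul_apply,
      ContinuousLinearMap.coe_fst', ContinuousLinearMap.coe_snd',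
      ContinuousLinearMap.id_apply, add_sub_cancel_right, smul_smul]
    rw [show ((-I) * I : ℂ) = 1 by simp [Complex.I_mul_I], one_smul]
  have hright : Function.RightInverse bwd fwd := by
    intro p
    simp only [fwd, bwd, Dfst, mI, ContinuousLinearMap.prod_apply,
      ContinuousLinearMap.comp_apply, ContinuousLinearMap.add_apply,
      ContinuousLinearMap.sub_apply, ContinuousLinearMap.smul_apply,
      ContinuousLinearMap.coe_fst', ContinuousLinearMap.coe_snd',
      ContinuousLinearMap.id_apply, smul_smul]
    rw [show (I * -I : ℂ) = 1 by simp [Complex.I_mul_I], one_smul, sub_add_cancel]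
  let eqv : (ℂ × QWS) ≃L[ℝ] (ℂ × QWS) :=
    ContinuousLinearEquiv.equivOfInverse fwd bwd hleft hright
  -- strict differentiability of F with derivative Dfst
  have hfst' : HasStrictFDerivAt (fun p : ℂ × QWS => p.1)
      (ContinuousLinearMap.fst ℝ ℂ QWS) ((0:ℂ), (0:QWS)) := hasStrictFDerivAt_fst
  have hsnd' : HasStrictFDerivAt (fun p : ℂ × QWS => p.2)
      (ContinuousLinearMap.snd ℝ ℂ QWS) ((0:ℂ), (0:QWS)) := hasStrictFDerivAt_snd
  have hΦcomp : HasStrictFDerivAt (fun p : ℂ × QWS => B.Φp p.1)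
      ((B.DΦp 0).comp (ContinuousLinearMap.fst ℝ ℂ QWS)) ((0:ℂ), (0:QWS)) :=
    HasStrictFDerivAt.comp ((0:ℂ), (0:QWS)) hΦstrict hfst'
  have hA : HasStrictFDerivAt (fun p : ℂ × QWS => p.2 - B.Φp p.1)
      (ContinuousLinearMap.snd ℝ ℂ QWS - (B.DΦp 0).comp (ContinuousLinearMap.fst ℝ ℂ QWS))
      ((0:ℂ), (0:QWS)) := hsnd'.sub hΦcomp
  have hDmap : HasStrictFDerivAt (fun p : ℂ × QWS => B.DΦp p.1)
      ((fderiv ℝ B.DΦp 0).comp (ContinuousLinearMap.fst ℝ ℂ QWS)) ((0:ℂ), (0:QWS)) :=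
    HasStrictFDerivAt.comp ((0:ℂ), (0:QWS)) hDstrict hfst'
  have hDw : ∀ w : ℂ, HasStrictFDerivAt (fun p : ℂ × QWS => I • (B.DΦp p.1 w))
      (I • ((B.DΦp 0).comp (0 : (ℂ × QWS) →L[ℝ] ℂ) +
        ((fderiv ℝ B.DΦp 0).comp (ContinuousLinearMap.fst ℝ ℂ QWS)).flip w))
      ((0:ℂ), (0:QWS)) := by
    intro w
    exact (hDmap.clm_apply (hasStrictFDerivAt_const w _)).const_smul I
  have hin : ∀ w : ℂ, HasStrictFDerivAt
      (fun p : ℂ × QWS => (inner ℂ (p.2 - B.Φp p.1) (I • B.DΦp p.1 w) : ℂ))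
      ((fderivInnerCLM ℂ (((0:ℂ),(0:QWS)).2 - B.Φp ((0:ℂ),(0:QWS)).1,
          I • B.DΦp ((0:ℂ),(0:QWS)).1 w)).comp
        ((ContinuousLinearMap.snd ℝ ℂ QWS -
          (B.DΦp 0).comp (ContinuousLinearMap.fst ℝ ℂ QWS)).prod
          (I • ((B.DΦp 0).comp (0 : (ℂ × QWS) →L[ℝ] ℂ) +
            ((fderiv ℝ B.DΦp 0).comp (ContinuousLinearMap.fst ℝ ℂ QWS)).flip w))))
      ((0:ℂ), (0:QWS)) := fun w => hA.inner ℂ (hDw w)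
  have hF : HasStrictFDerivAt F Dfst ((0:ℂ), (0:QWS)) := by
    have h1 := (Complex.ofRealCLM.hasStrictFDerivAt.comp _
      (Complex.reCLM.hasStrictFDerivAt.comp _ (hin 1)))
    have h2 := ((Complex.ofRealCLM.hasStrictFDerivAt.comp _
      (Complex.reCLM.hasStrictFDerivAt.comp _ (hin I))).const_smul I)
    have h := h1.add h2
    have heq : (Complex.ofRealCLM.comp (Complex.reCLM.comp
        ((fderivInnerCLM ℂ (((0:ℂ),(0:QWS)).2 - B.Φp ((0:ℂ),(0:QWS)).1,
            I • B.DΦp ((0:ℂ),(0:QWS)).1 1)).comp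
          ((ContinuousLinearMap.snd ℝ ℂ QWS -
            (B.DΦp 0).comp (ContinuousLinearMap.fst ℝ ℂ QWS)).prod
            (I • ((B.DΦp 0).comp (0 : (ℂ × QWS) →L[ℝ] ℂ) +
              ((fderiv ℝ B.DΦp 0).comp (ContinuousLinearMap.fst ℝ ℂ QWS)).flip 1)))))) +
        I • (Complex.ofRealCLM.comp (Complex.reCLM.comp
        ((fderivInnerCLM ℂ (((0:ℂ),(0:QWS)).2 - B.Φp ((0:ℂ),(0:QWS)).1,
            I • B.DΦp ((0:ℂ),(0:QWS)).1 I)).comp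
          ((ContinuousLinearMap.snd ℝ ℂ QWS -
            (B.DΦp 0).comp (ContinuousLinearMap.fst ℝ ℂ QWS)).prod
            (I • ((B.DΦp 0).comp (0 : (ℂ × QWS) →L[ℝ] ℂ) +
              ((fderiv ℝ B.DΦp 0).comp (ContinuousLinearMap.fst ℝ ℂ QWS)).flip I)))))) = Dfst := by
      refine ContinuousLinearMap.ext fun p => ?_
      obtain ⟨h, v⟩ := p
      simp only [Dfst, cC, c1, c2, mI, hΦ0, hT0, ContinuousLinearMap.add_apply,
        ContinuousLinearMap.comp_apply, ContinuousLinearMap.coe_fst',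
        ContinuousLinearMap.coe_snd', ContinuousLinearMap.sub_apply,
        ContinuousLinearMap.smul_apply, ContinuousLinearMap.prod_apply,
        ContinuousLinearMap.flip_apply, ContinuousLinearMap.zero_apply,
        ContinuousLinearMap.id_apply, ContinuousLinearMap.coe_restrictScalars',
        fderivInnerCLM_apply, Complex.reCLM_apply, Complex.ofRealCLM_apply,
        innerSL_apply_apply, map_zero, sub_zero, zero_sub, inner_zero_left, zero_add,
        one_smul, smul_smul, Complex.I_mul_I, neg_smul, inner_neg_right,
        inner_sub_left, inner_smul_left, inner_smul_right, inner_self_eq_norm_sq_to_K,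
        Ch.hφpnorm, smul_eq_mul]
      push_cast
      simp only [Complex.mul_re, Complex.I_re, Complex.I_im, Complex.conj_re,
        Complex.conj_im, Complex.one_re, Complex.one_im]
      apply Complex.ext <;>
        simp [Complex.add_re, Complex.add_im, Complex.mul_re, Complex.mul_im,
          Complex.I_re, Complex.I_im, Complex.ofReal_re, Complex.ofReal_im,
          inner_re_symm]
      all_goals try ring
      all_goals rw [← inner_conj_symm φ v]
      all_goals simp only [Complex.conj_im, Complex.conj_re]
      all_goals simp [hφdef, Ch.hφpnorm]
      all_goals ring
    rw [← heq]
    exact h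
  -- the map G and its local inverse
  set Gf : ℂ × QWS → ℂ × QWS := fun p => (F p, p.2) with hGdef
  have hG : HasStrictFDerivAt Gf (eqv : (ℂ × QWS) →L[ℝ] (ℂ × QWS)) ((0:ℂ), (0:QWS)) :=
    hF.prodMk hsnd'
  have hF00 : F ((0:ℂ), (0:QWS)) = 0 := by
    have hrfl : F ((0:ℂ), (0:QWS)) =
        (((inner ℂ ((0:QWS) - B.Φp 0) (I • B.DΦp 0 1) : ℂ).re : ℝ) : ℂ) +
          I • (((inner ℂ ((0:QWS) - B.Φp 0) (I • B.DΦp 0 I) : ℂ).re : ℝ) : ℂ) := rfl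
    rw [hrfl, hΦ0]
    simp
  have hG00 : Gf ((0:ℂ), (0:QWS)) = ((0:ℂ), (0:QWS)) := by
    have hrfl2 : Gf ((0:ℂ), (0:QWS)) = (F ((0:ℂ), (0:QWS)), (0:QWS)) := rfl
    rw [hrfl2, hF00]
  set ginv := hG.localInverse Gf eqv ((0:ℂ), (0:QWS)) with hginvdef
  have hgcont : ContinuousAt ginv ((0:ℂ), (0:QWS)) := by
    have h := hG.localInverse_continuousAt
    rwa [hG00] at h
  have hg00 : ginv ((0:ℂ), (0:QWS)) = ((0:ℂ), (0:QWS)) := by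
    have h := hG.localInverse_apply_image
    rwa [hG00] at h
  have hrinv : ∀ᶠ y in nhds ((0:ℂ), (0:QWS)), Gf (ginv y) = y := by
    have h := hG.eventually_right_inverse
    rwa [hG00] at h
  have htend : Filter.Tendsto (fun y => ‖(ginv y).1‖)
      (nhds ((0:ℂ), (0:QWS))) (nhds 0) := by
    have h1 : Filter.Tendsto ginv (nhds ((0:ℂ), (0:QWS))) (nhds ((0:ℂ), (0:QWS))) := by
      have := hgcont.tendsto
      rwa [hg00] at this
    have h2 : Filter.Tendsto (fun y => (ginv y).1) (nhds ((0:ℂ), (0:QWS))) (nhds (0:ℂ)) :=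
      (continuous_fst.tendsto _).comp h1
    have h3 := (continuous_norm.tendsto (0:ℂ)).comp h2
    simpa [Function.comp_def] using h3
  have hsmall : ∀ᶠ y in nhds ((0:ℂ), (0:QWS)), ‖(ginv y).1‖ < B.δ :=
    htend (Iio_mem_nhds hδ)
  have hboth := hrinv.and hsmall
  rw [Metric.eventually_nhds_iff] at hboth
  obtain ⟨ε, hε, hball⟩ := hboth
  refine ⟨ε, hε, fun u _ hu => ?_⟩
  have hyd : dist (((0:ℂ), u) : ℂ × QWS) ((0:ℂ), (0:QWS)) < ε := by
    rw [Prod.dist_eq]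
    exact max_lt (by simpa using hε) (by simpa [dist_eq_norm] using hu)
  obtain ⟨hGy, habs⟩ := hball hyd
  set z := (ginv ((0:ℂ), u)).1 with hzdef
  have hsnd2 : (ginv ((0:ℂ), u)).2 = u := by
    have := congrArg Prod.snd hGy
    simpa [hGdef] using this
  have hpair : ginv ((0:ℂ), u) = (z, u) := by
    conv_lhs => rw [← Prod.mk.eta (p := ginv ((0:ℂ), u))]
    rw [hsnd2]
  have hFz : F (z, u) = 0 := by
    have := congrArg Prod.fst hGy
    rw [hpair] at this
    simpa [hGdef] using this
  refine ⟨z, habs, ?_⟩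
  -- extract the two real components
  rw [hFdef] at hFz
  simp only at hFz
  obtain ⟨hre, him⟩ := Complex.ext_iff.mp hFz
  simp only [Complex.add_re, Complex.add_im, Complex.ofReal_re, Complex.ofReal_im,
    smul_eq_mul, Complex.mul_re, Complex.mul_im, Complex.I_re, Complex.I_im,
    Complex.zero_re, Complex.zero_im, zero_mul, one_mul, mul_zero, zero_sub, add_zero,
    zero_add, neg_zero, mul_one, sub_zero] at hre him
  have ha : (inner ℂ (u - B.Φp z) (B.DΦp z 1) : ℂ).im = 0 := by
    rw [inner_smul_right] at hre
    simp [Complex.mul_re, inner_sub_left] at hre ⊢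
    linarith
  have hb : (inner ℂ (u - B.Φp z) (B.DΦp z I) : ℂ).im = 0 := by
    rw [inner_smul_right] at him
    simp [Complex.mul_im, Complex.mul_re, inner_sub_left] at him ⊢
    linarith
  intro w
  have hw : B.DΦp z w = (w.re : ℝ) • B.DΦp z 1 + (w.im : ℝ) • B.DΦp z I := by
    rw [← map_smul, ← map_smul, ← map_add]
    congr 1
    simp [Complex.real_smul, Complex.re_add_im]
  show (inner ℂ (u - B.Φp z) (I • B.DΦp z w) : ℂ).re = 0
  rw [inner_smul_right]
  have hc : (inner ℂ (u - B.Φp z) (B.DΦp z w) : ℂ) =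
      (w.re : ℂ) * (inner ℂ (u - B.Φp z) (B.DΦp z 1) : ℂ) +
      (w.im : ℂ) * (inner ℂ (u - B.Φp z) (B.DΦp z I) : ℂ) := by
    rw [hw, inner_add_right, ← algebraMap_smul ℂ (w.re : ℝ) (B.DΦp z 1),
      ← algebraMap_smul ℂ (w.im : ℝ) (B.DΦp z I), inner_smul_right, inner_smul_right]
    simp [Complex.coe_algebraMap, inner_sub_left]
  rw [hc]
  simp [Complex.mul_re, Complex.add_im, Complex.mul_im, ha, hb]
  rw [inner_sub_left, Complex.sub_im] at ha hb
  linear_combination (-w.im) * hb + (-w.re) * ha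
end
end

section
/- Let L[z] := D𝒰(Φ_+[z]) be the R-linear Fréchet derivative of 𝒰 at the nonlinear bound state Φ_+[z], for |z| small enough that L[z] is invertible. Then for all u, v ∈ l²(Z,C²): ⟨L[z]u, i v⟩ = ⟨u, i L[z]^{−1} v⟩. -/
noncomputable section

open scoped ENNReal NNReal BigOperators
open Complex

namespace QWProof
open QW NormedSpace ContinuousLinearMap

local notation "⟪" x ", " y "⟫" => @inner ℂ _ _ x y

variable (γ : C2 →L[ℂ] C2) (g : ℝ → ℝ)

/-- `A = i γ`. -/
def Aop : C2 →L[ℂ] C2 := Complex.I • γ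

/-- `q(w) = ⟨w, γ w⟩`. -/
def qf (w : C2) : ℝ := rinner2 w (γ w)

/-- `θ(w) = g(q(w))`. -/
def thf (w : C2) : ℝ := g (qf γ w)

lemma phase_eq (w : C2) : phase γ g w = exp ((thf γ g w) • Aop γ) := by
  rw [QW.phase, Aop, ← smul_assoc (thf γ g w) Complex.I γ, Complex.real_smul, mul_smul]
  rfl


variable {γ g}

lemma rsmul_eq {M : Type*} [AddCommGroup M] [Module ℂ M] [Module ℝ M]
    [IsScalarTower ℝ ℂ M] (t : ℝ) (x : M) : t • x = (t : ℂ) • x := by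
  rw [← algebraMap_smul ℂ t x, Complex.coe_algebraMap]

lemma smul_Aop_eq (t : ℝ) : t • Aop γ = ((t : ℂ) * Complex.I) • γ := by
  rw [Aop, ← smul_assoc, Complex.real_smul]

lemma star_smul_Aop (hγ : IsSelfAdjoint γ) (t : ℝ) :
    star (t • Aop γ) = -(t • Aop γ) := by
  rw [smul_Aop_eq, star_smul, hγ.star_eq]
  have : star ((t : ℂ) * Complex.I) = -((t : ℂ) * Complex.I) := by
    simp [Complex.ext_iff]
  rw [this]
  exact neg_smul ((t : ℂ) * Complex.I) γ

lemma star_phase_mul_self (hγ : IsSelfAdjoint γ) (w : C2) :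
    star (phase γ g w) * phase γ g w = 1 := by
  rw [phase_eq, star_exp, star_smul_Aop hγ]
  exact ((exp_add_of_commute_of_mem_ball (𝕂 := ℝ) (Commute.neg_left (Commute.refl (thf γ g w • Aop γ)))
    (by simp [expSeries_radius_eq_top]) (by simp [expSeries_radius_eq_top])).symm.trans
    (by rw [neg_add_cancel, NormedSpace.exp_zero]))

/-- inner-product preservation for operators with `star T * T = 1`. -/
lemma inner_isom {T : C2 →L[ℂ] C2} (hT : star T * T = 1) (a b : C2) :
    ⟪T a, T b⟫ = ⟪a, b⟫ := by
  have h1 : ⟪a, (ContinuousLinearMap.adjoint T) (T b)⟫ = ⟪T a, T b⟫ :=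
    ContinuousLinearMap.adjoint_inner_right T a (T b)
  rw [← h1, ← ContinuousLinearMap.star_eq_adjoint, ← ContinuousLinearMap.mul_apply, hT,
    ContinuousLinearMap.one_apply]

lemma inner_phase_phase (hγ : IsSelfAdjoint γ) (w a b : C2) :
    ⟪phase γ g w a, phase γ g w b⟫ = ⟪a, b⟫ :=
  inner_isom (star_phase_mul_self hγ w) a b

lemma phase_comm_γ (w v : C2) : γ (phase γ g w v) = phase γ g w (γ v) := by
  have h : Commute (thf γ g w • Aop γ) γ := by
    rw [smul_Aop_eq]
    exact (Commute.refl γ).smul_left _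
  have := h.exp_left.symm
  rw [phase_eq]
  calc γ (exp (thf γ g w • Aop γ) v)
      = (γ * exp (thf γ g w • Aop γ)) v := rfl
    _ = (exp (thf γ g w • Aop γ) * γ) v := by rw [this]
    _ = _ := rfl


variable (γ g)

/-- derivative of `q`. -/
def Dq (a : C2) : C2 →L[ℝ] ℝ :=
  (2:ℝ) • (Complex.reCLM.comp (((innerSL ℂ (γ a))).restrictScalars ℝ))

lemma Dq_apply (a h : C2) : Dq γ a h = 2 * (⟪γ a, h⟫).re := by
  simp [Dq]

/-- derivative of `θ`. -/
def Dth (a : C2) : C2 →L[ℝ] ℝ := deriv g (qf γ a) • Dq γ a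

lemma Dth_apply (a h : C2) :
    Dth γ g a h = deriv g (qf γ a) * (2 * (⟪γ a, h⟫).re) := by
  simp [Dth, Dq_apply]

/-- derivative of the nonlinear coin at `a`. -/
def DF (a : C2) : C2 →L[ℝ] C2 :=
  ((phase γ g a).restrictScalars ℝ) + (Dth γ g a).smulRight (phase γ g a ((Aop γ) a))

lemma DF_apply (a h : C2) :
    DF γ g a h = phase γ g a h + (Dth γ g a h) • phase γ g a ((Aop γ) a) := by
  simp [DF]

variable {γ g}

lemma im_inner_DF (hγ : IsSelfAdjoint γ) (a h k : C2) :
    (⟪DF γ g a h, DF γ g a k⟫).im = (⟪h, k⟫).im := by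
  have hE : ∀ x y : C2, ⟪phase γ g a x, phase γ g a y⟫ = ⟪x, y⟫ := inner_phase_phase hγ a
  have hv : phase γ g a ((Aop γ) a) = Complex.I • (phase γ g a (γ a)) := by
    rw [Aop]
    simp
  rw [DF_apply, DF_apply, hv, rsmul_eq (Dth γ g a h), rsmul_eq (Dth γ g a k)]
  simp only [inner_add_left, inner_add_right, inner_smul_left, inner_smul_right, hE,
    Complex.conj_ofReal, map_mul, Complex.conj_I]
  have e1 : (⟪h, γ a⟫).re = (⟪γ a, h⟫).re := by
    simpa using inner_re_symm (𝕜 := ℂ) h (γ a)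
  have e0 : (⟪γ a, γ a⟫).im = 0 := by
    simpa using inner_self_im (𝕜 := ℂ) (γ a)
  simp only [Dth_apply, Complex.add_im, Complex.add_re, Complex.mul_im, Complex.mul_re,
    Complex.I_re, Complex.I_im, Complex.neg_re, Complex.neg_im, Complex.ofReal_re,
    Complex.ofReal_im, e0, e1]
  ring


lemma inner_selfadj (hγ : IsSelfAdjoint γ) (a h : C2) : ⟪a, γ h⟫ = ⟪γ a, h⟫ := by
  rw [← ContinuousLinearMap.adjoint_inner_left γ h a, ← ContinuousLinearMap.star_eq_adjoint,
    hγ.star_eq]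

lemma re_symm (x y : C2) : (⟪x, y⟫).re = (⟪y, x⟫).re := by
  simpa using inner_re_symm (𝕜 := ℂ) x y

set_option maxHeartbeats 1000000 in
lemma hasFDerivAt_Ncoin (hγ : IsSelfAdjoint γ) (hg : ContDiff ℝ (⊤ : ℕ∞) g) (a : C2) :
    HasFDerivAt (Ncoin γ g) (DF γ g a) a := by
  have hq : HasFDerivAt (qf γ) (Dq γ a) a := by
    have hγa : HasFDerivAt (fun w : C2 => γ w) (γ.restrictScalars ℝ) a :=
      (γ.restrictScalars ℝ).hasFDerivAt
    have hid : HasFDerivAt (fun w : C2 => w) (ContinuousLinearMap.id ℝ C2) a := hasFDerivAt_id a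
    have hinner := hid.inner ℂ hγa
    have hre := (Complex.reCLM.hasFDerivAt
      (x := (inner ℂ a (γ a) : ℂ))).comp a hinner
    have hEq : Complex.reCLM.comp ((fderivInnerCLM ℂ (a, γ a)).comp
        ((ContinuousLinearMap.id ℝ C2).prod (γ.restrictScalars ℝ))) = Dq γ a := by
      ext h
      simp only [ContinuousLinearMap.coe_comp', Function.comp_apply,
        ContinuousLinearMap.prod_apply, ContinuousLinearMap.coe_id', id_eq,
        ContinuousLinearMap.coe_restrictScalars', fderivInnerCLM_apply, Complex.reCLM_apply,
        Dq_apply]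
      rw [inner_selfadj hγ a h, Complex.add_re, re_symm h (γ a)]
      ring
    exact hEq ▸ hre
  have hθ : HasFDerivAt (thf γ g) (Dth γ g a) a := by
    have hgd : HasDerivAt g (deriv g (qf γ a)) (qf γ a) :=
      ((hg.differentiable (by simp)) (qf γ a)).hasDerivAt
    exact hgd.comp_hasFDerivAt a hq
  have hψ : HasDerivAt (fun t : ℝ => exp (t • Aop γ))
      (exp (thf γ g a • Aop γ) * Aop γ) (thf γ g a) := hasDerivAt_exp_smul_const (𝕂 := ℝ) (Aop γ) (thf γ g a)
  have hph : HasFDerivAt (fun w => exp (thf γ g w • Aop γ))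
      ((Dth γ g a).smulRight (exp (thf γ g a • Aop γ) * Aop γ)) a := by
    have h2 := (hψ.hasFDerivAt).comp a hθ
    have h3 : ((1 : ℝ →L[ℝ] ℝ).smulRight
        (exp (thf γ g a • Aop γ) * Aop γ)).comp (Dth γ g a)
        = (Dth γ g a).smulRight (exp (thf γ g a • Aop γ) * Aop γ) := by
      ext h
      simp
    exact h3 ▸ h2
  have hph' : HasFDerivAt (fun w => phase γ g w)
      ((Dth γ g a).smulRight (exp (thf γ g a • Aop γ) * Aop γ)) a := by
    simp only [phase_eq]
    exact hph
  let RS := (ContinuousLinearMap.restrictScalarsIsometry ℂ C2 C2 ℝ ℝ).toContinuousLinearMap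
  have hM := (RS.hasFDerivAt (x := phase γ g a)).comp a hph'
  have happ := hM.clm_apply (hasFDerivAt_id a)
  have hD : (RS (phase γ g a)).comp (ContinuousLinearMap.id ℝ C2) +
      (RS.comp ((Dth γ g a).smulRight (exp (thf γ g a • Aop γ) * Aop γ))).flip a
      = DF γ g a := by
    ext h
    simp only [ContinuousLinearMap.add_apply, ContinuousLinearMap.coe_comp',
      Function.comp_apply, ContinuousLinearMap.coe_id', id_eq, ContinuousLinearMap.flip_apply,
      ContinuousLinearMap.smulRight_apply, ContinuousLinearMap.smul_apply,
      ContinuousLinearMap.mul_apply, DF_apply, RS,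
      LinearIsometry.coe_toContinuousLinearMap,
      ContinuousLinearMap.coe_restrictScalarsIsometry,
      ContinuousLinearMap.coe_restrictScalars', ← phase_eq]
  exact hD ▸ happ


lemma continuous_phase (hg : ContDiff ℝ (⊤ : ℕ∞) g) : Continuous (phase γ g) := by
  have hqc : Continuous (qf γ) :=
    Complex.continuous_re.comp (continuous_id.inner γ.continuous)
  have hthc : Continuous (thf γ g) := hg.continuous.comp hqc
  have h1 : Continuous fun a : C2 => thf γ g a • Aop γ := hthc.smul continuous_const
  have h2 : Continuous fun a : C2 => NormedSpace.exp (thf γ g a • Aop γ) :=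
    (continuous_iff_continuousAt.2 fun x => (exp_analytic (𝕂 := ℝ) x).continuousAt).comp h1
  have hfe : phase γ g = fun w => NormedSpace.exp (thf γ g w • Aop γ) :=
    funext fun w => phase_eq γ g w
  rw [hfe]
  exact h2

lemma continuous_DF (hg : ContDiff ℝ (⊤ : ℕ∞) g) : Continuous (DF γ g) := by
  have hqc : Continuous (qf γ) :=
    Complex.continuous_re.comp (continuous_id.inner γ.continuous)
  have hph : Continuous (phase γ g) := continuous_phase hg
  have h1 : Continuous fun a : C2 => ((phase γ g a).restrictScalars ℝ : C2 →L[ℝ] C2) :=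
    (ContinuousLinearMap.restrictScalarsIsometry ℂ C2 C2 ℝ ℝ).continuous.comp hph
  have hDq : Continuous fun a : C2 => Dq γ a := by
    have h2 : Continuous fun a : C2 => (innerSL ℂ (γ a)) :=
      (innerSL ℂ (E := C2)).continuous.comp γ.continuous
    have h3 : Continuous fun a : C2 => ((innerSL ℂ (γ a)).restrictScalars ℝ : C2 →L[ℝ] ℂ) :=
      (ContinuousLinearMap.restrictScalarsIsometry ℂ C2 ℂ ℝ ℝ).continuous.comp h2
    have h4 : Continuous fun a : C2 =>
        Complex.reCLM.comp ((innerSL ℂ (γ a)).restrictScalars ℝ) :=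
      (Complex.reCLM.isBoundedLinearMap_comp_left (E := C2)).continuous.comp h3
    exact h4.const_smul (2:ℝ)
  have hDth : Continuous fun a : C2 => Dth γ g a :=
    ((hg.continuous_deriv (by simp)).comp hqc).smul hDq
  have hvec : Continuous fun a : C2 => phase γ g a ((Aop γ) a) :=
    hph.clm_apply (Aop γ).continuous
  have h5 : Continuous fun a : C2 => (Dth γ g a).smulRight (phase γ g a ((Aop γ) a)) :=
    (((ContinuousLinearMap.smulRightL ℝ C2 C2).continuous.comp hDth).clm_apply hvec)
  exact h1.add h5

lemma DF_bound (hg : ContDiff ℝ (⊤ : ℕ∞) g) (r : ℝ) :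
    ∃ M : ℝ, 0 ≤ M ∧ ∀ a : C2, ‖a‖ ≤ r → ‖DF γ g a‖ ≤ M := by
  obtain ⟨M, hM⟩ := (isCompact_closedBall (0:C2) r).bddAbove_image
    ((continuous_DF hg).norm.continuousOn)
  refine ⟨max M 0, le_max_right _ _, fun a ha => ?_⟩
  refine le_trans (hM ⟨a, ?_, rfl⟩) (le_max_left _ _)
  simpa [Metric.mem_closedBall, dist_zero_right] using ha

-- ### pointwise operators on ℓ²

lemma memℓp_pw {B : ℤ → C2 →L[ℝ] C2} {M : ℝ} (hM : ∀ x, ‖B x‖ ≤ M) (h : QWS) :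
    Memℓp (fun x => B x (h x)) 2 := by
  have hM0 : 0 ≤ M := le_trans (norm_nonneg (B 0)) (hM 0)
  have h2 : (0:ℝ) < (2:ℝ≥0∞).toReal := by norm_num
  apply memℓp_gen
  have hs : Summable fun x : ℤ => ‖h x‖ ^ (2:ℝ≥0∞).toReal := (lp.memℓp h).summable h2
  refine Summable.of_nonneg_of_le (fun x => ?_) (fun x => ?_)
    (hs.mul_left (M ^ (2:ℝ≥0∞).toReal))
  · positivity
  · calc ‖B x (h x)‖ ^ (2:ℝ≥0∞).toReal
        ≤ (M * ‖h x‖) ^ (2:ℝ≥0∞).toReal := by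
          refine Real.rpow_le_rpow (norm_nonneg _) ?_ h2.le
          exact le_trans ((B x).le_opNorm (h x))
            (mul_le_mul_of_nonneg_right (hM x) (norm_nonneg _))
      _ = M ^ (2:ℝ≥0∞).toReal * ‖h x‖ ^ (2:ℝ≥0∞).toReal :=
          Real.mul_rpow hM0 (norm_nonneg _)

lemma lp_norm_le {f h : QWS} {C : ℝ} (hC : 0 ≤ C) (hb : ∀ x, ‖f x‖ ≤ C * ‖h x‖) :
    ‖f‖ ≤ C * ‖h‖ := by
  have h2 : (0:ℝ) < (2:ℝ≥0∞).toReal := by norm_num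
  apply lp.norm_le_of_tsum_le h2 (mul_nonneg hC (norm_nonneg _))
  have hs : Summable fun x : ℤ => ‖h x‖ ^ (2:ℝ≥0∞).toReal := (lp.memℓp h).summable h2
  calc ∑' x : ℤ, ‖f x‖ ^ (2:ℝ≥0∞).toReal
      ≤ ∑' x : ℤ, C ^ (2:ℝ≥0∞).toReal * ‖h x‖ ^ (2:ℝ≥0∞).toReal := by
        refine Summable.tsum_le_tsum (fun x => ?_) ((lp.memℓp f).summable h2) (hs.mul_left _)
        rw [← Real.mul_rpow hC (norm_nonneg _)]
        exact Real.rpow_le_rpow (norm_nonneg _) (hb x) h2.le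
    _ = C ^ (2:ℝ≥0∞).toReal * ∑' x : ℤ, ‖h x‖ ^ (2:ℝ≥0∞).toReal := tsum_mul_left
    _ = C ^ (2:ℝ≥0∞).toReal * ‖h‖ ^ (2:ℝ≥0∞).toReal := by
        rw [lp.norm_rpow_eq_tsum h2]
    _ = (C * ‖h‖) ^ (2:ℝ≥0∞).toReal := (Real.mul_rpow hC (norm_nonneg _)).symm

/-- a uniformly bounded family of operators acting pointwise on `ℓ²`. -/
def pwCLM (B : ℤ → C2 →L[ℝ] C2) (M : ℝ) (hM : ∀ x, ‖B x‖ ≤ M) : QWS →L[ℝ] QWS :=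
  LinearMap.mkContinuous
    { toFun := fun h => (⟨fun x => B x (h x), memℓp_pw hM h⟩ : QWS)
      map_add' := fun h1 h2 => by
        apply Subtype.ext
        funext x
        simp only [lp.coeFn_add, Pi.add_apply, map_add]
      map_smul' := fun c h => by
        apply Subtype.ext
        funext x
        simp only [lp.coeFn_smul, Pi.smul_apply, map_smul, RingHom.id_apply] }
    M (fun h => by
      refine lp_norm_le (le_trans (norm_nonneg (B 0)) (hM 0)) (fun x => ?_)
      exact le_trans ((B x).le_opNorm (h x))
        (mul_le_mul_of_nonneg_right (hM x) (norm_nonneg _)))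

@[simp] lemma pwCLM_apply {B : ℤ → C2 →L[ℝ] C2} {M : ℝ} {hM : ∀ x, ‖B x‖ ≤ M}
    (h : QWS) (x : ℤ) : pwCLM B M hM h x = B x (h x) := rfl


theorem Nop_hasFDerivAt (NL : NLSetting) (u : QWS) :
    ∃ D : QWS →L[ℝ] QWS, HasFDerivAt NL.Nop D u ∧
      ∀ (h : QWS) (x : ℤ), D h x = DF NL.γ NL.g (u x) (h x) := by
  obtain ⟨M, hM0, hM⟩ := DF_bound (γ := NL.γ) (g := NL.g) NL.hg (‖u‖)
  have hBM : ∀ x : ℤ, ‖DF NL.γ NL.g (u x)‖ ≤ M := fun x =>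
    hM _ (lp.norm_apply_le_norm two_ne_zero u x)
  refine ⟨pwCLM (fun x => DF NL.γ NL.g (u x)) M hBM, ?_, fun h x => rfl⟩
  rw [hasFDerivAt_iff_isLittleO_nhds_zero, Asymptotics.isLittleO_iff]
  intro ε hε
  have hK : IsCompact (Metric.closedBall (0:C2) (‖u‖+1)) := isCompact_closedBall _ _
  have hUC := hK.uniformContinuousOn_of_continuous
    (continuous_DF (γ := NL.γ) NL.hg).continuousOn
  rw [Metric.uniformContinuousOn_iff] at hUC
  obtain ⟨δ, hδ0, hδ⟩ := hUC ε hε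
  have hδ'0 : 0 < min (δ/2) 1 := lt_min (by linarith) one_pos
  filter_upwards [Metric.ball_mem_nhds (0 : QWS) hδ'0] with h hh
  rw [Metric.mem_ball, dist_zero_right] at hh
  refine lp_norm_le hε.le (fun x => ?_)
  have hx1 : ‖u x‖ ≤ ‖u‖ := lp.norm_apply_le_norm two_ne_zero u x
  have hx2 : ‖h x‖ ≤ min (δ/2) 1 := le_of_lt (lt_of_le_of_lt
    (lp.norm_apply_le_norm two_ne_zero h x) hh)
  have key : ‖Ncoin NL.γ NL.g (u x + h x) - Ncoin NL.γ NL.g (u x)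
      - DF NL.γ NL.g (u x) (h x)‖ ≤ ε * ‖h x‖ := by
    set s : Set C2 := Metric.closedBall (u x) (min (δ/2) 1) with hs
    have hder : ∀ y ∈ s, HasFDerivWithinAt (Ncoin NL.γ NL.g) (DF NL.γ NL.g y) s y :=
      fun y _ => (hasFDerivAt_Ncoin NL.hγ NL.hg y).hasFDerivWithinAt
    have hmemK : ∀ y ∈ s, y ∈ Metric.closedBall (0:C2) (‖u‖+1) := by
      intro y hy
      rw [Metric.mem_closedBall, dist_zero_right]
      calc ‖y‖ = ‖(y - u x) + u x‖ := by rw [sub_add_cancel]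
        _ ≤ ‖y - u x‖ + ‖u x‖ := norm_add_le _ _
        _ ≤ min (δ/2) 1 + ‖u‖ := by
            refine add_le_add ?_ hx1
            rw [Metric.mem_closedBall, dist_eq_norm] at hy
            exact hy
        _ ≤ ‖u‖ + 1 := by
            have := min_le_right (δ/2) 1
            linarith
    have hbound : ∀ y ∈ s, ‖DF NL.γ NL.g y - DF NL.γ NL.g (u x)‖ ≤ ε := by
      intro y hy
      have hy0 : u x ∈ s := Metric.mem_closedBall_self hδ'0.le
      have hlt := hδ y (hmemK y hy) (u x) (hmemK (u x) hy0) ?_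
      · rw [dist_eq_norm] at hlt
        exact hlt.le
      · rw [Metric.mem_closedBall] at hy
        calc dist y (u x) ≤ min (δ/2) 1 := hy
          _ ≤ δ/2 := min_le_left _ _
          _ < δ := by linarith
    have hxmem : u x ∈ s := Metric.mem_closedBall_self hδ'0.le
    have hymem : u x + h x ∈ s := by
      rw [Metric.mem_closedBall, dist_eq_norm, add_sub_cancel_left]
      exact hx2
    have := Convex.norm_image_sub_le_of_norm_hasFDerivWithin_le' hder hbound
      (convex_closedBall _ _) hxmem hymem
    simpa [add_sub_cancel_left] using this
  have hc : (NL.Nop (u + h) - NL.Nop u - pwCLM (fun x => DF NL.γ NL.g (u x)) M hBM h) x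
      = Ncoin NL.γ NL.g (u x + h x) - Ncoin NL.γ NL.g (u x) - DF NL.γ NL.g (u x) (h x) := by
    rw [lp.coeFn_sub, Pi.sub_apply, lp.coeFn_sub, Pi.sub_apply, NL.hNop, NL.hNop,
      pwCLM_apply, lp.coeFn_add, Pi.add_apply]
  rw [hc]
  exact key


lemma im_inner_pw (hγ : IsSelfAdjoint γ) {u : QWS} {D : QWS →L[ℝ] QWS}
    (hD : ∀ (h : QWS) (x : ℤ), D h x = DF γ g (u x) (h x)) (h k : QWS) :
    (inner ℂ (D h) (D k) : ℂ).im = (inner ℂ h k : ℂ).im := by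
  rw [lp.inner_eq_tsum, lp.inner_eq_tsum]
  have e1 : (∑' x : ℤ, (⟪D h x, D k x⟫ : ℂ)).im
      = ∑' x : ℤ, (⟪D h x, D k x⟫ : ℂ).im :=
    Complex.imCLM.map_tsum (lp.summable_inner (D h) (D k))
  have e2 : (∑' x : ℤ, (⟪h x, k x⟫ : ℂ)).im
      = ∑' x : ℤ, (⟪h x, k x⟫ : ℂ).im :=
    Complex.imCLM.map_tsum (lp.summable_inner h k)
  rw [show ((∑' x : ℤ, (⟪D h x, D k x⟫ : ℂ)).im) = _ from e1,
    show ((∑' x : ℤ, (⟪h x, k x⟫ : ℂ)).im) = _ from e2]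
  refine tsum_congr (fun x => ?_)
  rw [hD h x, hD k x]
  exact im_inner_DF hγ (u x) (h x) (k x)

-- ### unitarity of `U`

lemma inner_C2_eq (a b : C2) :
    (⟪a, b⟫ : ℂ) = (starRingEnd ℂ) (a 0) * b 0 + (starRingEnd ℂ) (a 1) * b 1 := by
  simp [PiLp.inner_apply, RCLike.inner_apply, Fin.sum_univ_two]
  ring

lemma comp_norm_le (a : C2) (i : Fin 2) : ‖a i‖ ≤ ‖a‖ := by
  rw [EuclideanSpace.norm_eq]
  have h1 : ‖a i‖ = Real.sqrt (‖a i‖ ^ 2) := (Real.sqrt_sq (norm_nonneg _)).symm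
  rw [h1]
  apply Real.sqrt_le_sqrt
  exact Finset.single_le_sum (f := fun j => ‖a j‖ ^ 2)
    (fun j _ => sq_nonneg _) (Finset.mem_univ i)

lemma summable_comp (u v : QWS) (i : Fin 2) :
    Summable fun x : ℤ => (starRingEnd ℂ) (u x i) * (v x i) := by
  refine Summable.of_norm_bounded (g := fun x => ‖u x‖ * ‖v x‖) (lp.summable_mul ?_ u v)
    (fun x => ?_)
  · rw [Real.holderConjugate_iff] <;> norm_num
  · rw [norm_mul, RCLike.norm_conj]
    exact mul_le_mul (comp_norm_le _ _) (comp_norm_le _ _) (norm_nonneg _) (norm_nonneg _)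

lemma inner_S (Q : Setting) (u v : QWS) : (inner ℂ (Q.S u) (Q.S v) : ℂ) = inner ℂ u v := by
  rw [lp.inner_eq_tsum, lp.inner_eq_tsum]
  set f : ℤ → ℂ := fun x => (starRingEnd ℂ) (u x 0) * (v x 0) with hf
  set G : ℤ → ℂ := fun x => (starRingEnd ℂ) (u x 1) * (v x 1) with hG
  have hsf : Summable f := summable_comp u v 0
  have hsG : Summable G := summable_comp u v 1
  have hsf' : Summable fun x : ℤ => f (x - 1) :=
    ((Equiv.subRight (1:ℤ)).summable_iff (f := f)).mpr hsf
  have hsG' : Summable fun x : ℤ => G (x + 1) :=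
    ((Equiv.addRight (1:ℤ)).summable_iff (f := G)).mpr hsG
  calc ∑' x : ℤ, (⟪Q.S u x, Q.S v x⟫ : ℂ)
      = ∑' x : ℤ, (f (x - 1) + G (x + 1)) := by
        refine tsum_congr (fun x => ?_)
        rw [inner_C2_eq, (Q.hS u x).1, (Q.hS u x).2, (Q.hS v x).1, (Q.hS v x).2]
    _ = (∑' x : ℤ, f (x - 1)) + ∑' x : ℤ, G (x + 1) := Summable.tsum_add hsf' hsG'
    _ = (∑' x : ℤ, f x) + ∑' x : ℤ, G x := by
        congr 1
        · simpa using (Equiv.subRight (1:ℤ)).tsum_eq f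
        · simpa using (Equiv.addRight (1:ℤ)).tsum_eq G
    _ = ∑' x : ℤ, (f x + G x) := (Summable.tsum_add hsf hsG).symm
    _ = ∑' x : ℤ, (⟪u x, v x⟫ : ℂ) :=
        tsum_congr (fun x => (inner_C2_eq (u x) (v x)).symm)

lemma inner_Chat (Q : Setting) (u v : QWS) :
    (inner ℂ (Q.Chat u) (Q.Chat v) : ℂ) = inner ℂ u v := by
  rw [lp.inner_eq_tsum, lp.inner_eq_tsum]
  refine tsum_congr (fun x => ?_)
  rw [Q.hChat u x, Q.hChat v x]
  refine inner_isom ?_ _ _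
  rw [QW.matCLM, ← map_star, ← map_mul, Unitary.star_mul_self_of_mem (Q.hCm x), map_one]

lemma inner_U (Q : Setting) (u v : QWS) : (inner ℂ (Q.U u) (Q.U v) : ℂ) = inner ℂ u v := by
  rw [Q.hU]
  exact (inner_S Q (Q.Chat u) (Q.Chat v)).trans (inner_Chat Q u v)

end QWProof

open QW Metric in
/-- **Lemma (symplectic orthogonality of the linearization).**
Let `L[z] = D𝒰(Φ_+[z])` be the ℝ-linear Fréchet derivative of `𝒰` at `Φ_+[z]`, invertible for
`|z|` small.  Then `⟨L[z]u, iv⟩ = ⟨u, i L[z]⁻¹ v⟩` for all `u, v ∈ ℓ²(ℤ,ℂ²)`. -/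
theorem linearization_symplectically_orthogonal
    (Q : QW.Setting) (A1 : QW.Assumption1 Q) (NL : QW.NLSetting)
    (Ch : QW.ChiralSetting Q) (B : QW.PlusBoundStates Q NL Ch)
    (L Linv : ℂ → (QWS →L[ℝ] QWS))
    (hL : ∀ z ∈ ball (0 : ℂ) B.δ, HasFDerivAt (QW.calU Q NL) (L z) (B.Φp z))
    (hLinv : ∀ z ∈ ball (0 : ℂ) B.δ,
      (∀ u : QWS, Linv z (L z u) = u) ∧ (∀ u : QWS, L z (Linv z u) = u)) :
    ∀ z ∈ ball (0 : ℂ) B.δ, ∀ u v : QWS,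
      QW.rinner (L z u) (Complex.I • v) = QW.rinner u (Complex.I • Linv z v) := by
  intro z hz u v
  set p := B.Φp z with hp
  obtain ⟨D1, hD1, hD1x⟩ := QWProof.Nop_hasFDerivAt NL p
  obtain ⟨D2, hD2, hD2x⟩ := QWProof.Nop_hasFDerivAt NL (Q.U (NL.Nop p))
  have hU1 : HasFDerivAt (fun w : QWS => Q.U w) (Q.U.restrictScalars ℝ) (NL.Nop p) :=
    (Q.U.restrictScalars ℝ).hasFDerivAt
  have hU2 : HasFDerivAt (fun w : QWS => Q.U w) (Q.U.restrictScalars ℝ)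
      (NL.Nop (Q.U (NL.Nop p))) := (Q.U.restrictScalars ℝ).hasFDerivAt
  have hcomp : HasFDerivAt (QW.calU Q NL)
      ((Q.U.restrictScalars ℝ).comp (D2.comp ((Q.U.restrictScalars ℝ).comp D1))) p := by
    have h1 := hU1.comp p hD1
    have h2 := hD2.comp p h1
    have h3 := hU2.comp p h2
    exact h3
  have hLz : L z = (Q.U.restrictScalars ℝ).comp (D2.comp ((Q.U.restrictScalars ℝ).comp D1)) :=
    (hL z hz).unique hcomp
  have hpres : ∀ a b : QWS, (inner ℂ (L z a) (L z b) : ℂ).im = (inner ℂ a b : ℂ).im := by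
    intro a b
    rw [hLz]
    simp only [ContinuousLinearMap.comp_apply, ContinuousLinearMap.coe_restrictScalars']
    rw [QWProof.inner_U Q, QWProof.im_inner_pw NL.hγ hD2x, QWProof.inner_U Q,
      QWProof.im_inner_pw NL.hγ hD1x]
  obtain ⟨hinv1, hinv2⟩ := hLinv z hz
  have hv : L z (Linv z v) = v := hinv2 v
  simp only [QW.rinner]
  calc (inner ℂ (L z u) (Complex.I • v) : ℂ).re
      = (inner ℂ (L z u) (Complex.I • (L z (Linv z v))) : ℂ).re := by rw [hv]
    _ = (Complex.I * (inner ℂ (L z u) (L z (Linv z v)) : ℂ)).re := by rw [inner_smul_right]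
    _ = -((inner ℂ (L z u) (L z (Linv z v)) : ℂ)).im := by simp [Complex.mul_re]
    _ = -((inner ℂ u (Linv z v) : ℂ)).im := by rw [hpres u (Linv z v)]
    _ = (Complex.I * (inner ℂ u (Linv z v) : ℂ)).re := by simp [Complex.mul_re]
    _ = (inner ℂ u (Complex.I • Linv z v) : ℂ).re := by rw [inner_smul_right]
end
end

section
/- Let γ be a self-adjoint 2×2 complex matrix, g ∈ C^∞(R,R) with g(0) = 0, and N: C² → C², N(w) := e^{i g(⟨w,γw⟩_{C²}) γ} w. For w ∈ C² define the R-linear map A(w)u := 2 g'(⟨w,γw⟩_{C²}) ⟨u,γw⟩_{C²} · i γ w. Then: (i) the R-linear Fréchet derivative is DN(w)u = e^{i g(⟨w,γw⟩_{C²})γ}(u + A(w)u); (ii) A(w)² = 0, so DN(w) is invertible with DN(w)^{−1} = (1 − A(w)) e^{−i g(⟨w,γw⟩_{C²}) γ}; (iii) ⟨DN(w)u, i v⟩_{C²} = ⟨u, i DN(w)^{−1} v⟩_{C²} for all u, v ∈ C². -/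
set_option maxHeartbeats 1000000


noncomputable section

open scoped ENNReal NNReal BigOperators
open Complex

namespace QWAux
open NormedSpace ContinuousLinearMap QW

lemma rinner2_add_left (u v x : C2) : QW.rinner2 (u + v) x = QW.rinner2 u x + QW.rinner2 v x := by
  simp [QW.rinner2, inner_add_left]

lemma rinner2_sub_left (u v x : C2) : QW.rinner2 (u - v) x = QW.rinner2 u x - QW.rinner2 v x := by
  simp [QW.rinner2, inner_sub_left]

lemma rinner2_smul_left (r : ℝ) (u x : C2) : QW.rinner2 (r • u) x = r * QW.rinner2 u x := by
  simp [QW.rinner2, inner_smul_real_left]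

lemma rinner2_I_smul_self (x : C2) : QW.rinner2 (Complex.I • x) x = 0 := by
  simp [QW.rinner2, inner_smul_left, Complex.mul_re, inner_self_im]; rw [← Complex.ofReal_pow, Complex.ofReal_im]

lemma rinner2_symm (u x : C2) : (inner ℂ x u : ℂ).re = QW.rinner2 u x := by
  simp [QW.rinner2, inner_re_symm]; exact inner_re_symm (𝕜 := ℂ) x u

lemma coe_real_smul (r : ℝ) (T : C2 →L[ℂ] C2) : ((r : ℝ) : ℂ) • T = r • T := by
  rw [← Complex.coe_algebraMap]
  exact algebraMap_smul ℂ r T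

lemma star_smul_I_gamma (γ : C2 →L[ℂ] C2) (hγ : IsSelfAdjoint γ) (r : ℝ) :
    star ((r : ℂ) • Complex.I • γ) = -((r : ℂ) • Complex.I • γ) := by
  rw [star_smul, star_smul, hγ.star_eq]
  simp [Complex.conj_I, smul_smul, ← Complex.ofReal_neg]
  ring_nf
  module

lemma exp_inner (X : C2 →L[ℂ] C2) (hX : star X = -X) (a b : C2) :
    (inner ℂ (NormedSpace.exp X a) b : ℂ) = inner ℂ a (NormedSpace.exp (-X) b) := by
  rw [← hX, ← NormedSpace.star_exp, ContinuousLinearMap.star_eq_adjoint,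
    ContinuousLinearMap.adjoint_inner_right]

lemma exp_neg_apply (X : C2 →L[ℂ] C2) (x : C2) :
    NormedSpace.exp (-X) (NormedSpace.exp X x) = x := by
  have h : NormedSpace.exp (-X) * NormedSpace.exp X = 1 := by
    rw [← NormedSpace.exp_add_of_commute_of_mem_ball (𝕂 := ℂ) ((Commute.refl X).neg_left)
      ((NormedSpace.expSeries_radius_eq_top ℂ (C2 →L[ℂ] C2)).symm ▸ edist_lt_top _ _)
      ((NormedSpace.expSeries_radius_eq_top ℂ (C2 →L[ℂ] C2)).symm ▸ edist_lt_top _ _)]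
    simp [NormedSpace.exp_zero]
  calc NormedSpace.exp (-X) (NormedSpace.exp X x)
      = (NormedSpace.exp (-X) * NormedSpace.exp X) x := rfl
    _ = x := by rw [h]; rfl

lemma exp_apply_neg (X : C2 →L[ℂ] C2) (x : C2) :
    NormedSpace.exp X (NormedSpace.exp (-X) x) = x := by
  simpa using exp_neg_apply (-X) x

lemma key_inner (x u m : C2) (c : ℝ) :
    QW.rinner2 (u + (c * QW.rinner2 u x) • (Complex.I • x)) (Complex.I • m)
      = QW.rinner2 u (Complex.I • (m - (c * QW.rinner2 m x) • (Complex.I • x))) := by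
  simp [QW.rinner2, inner_add_left, inner_smul_left, inner_smul_right, inner_sub_right,
    Complex.mul_re]
  rw [show (inner ℂ x m).re = (inner ℂ m x).re from inner_re_symm (𝕜 := ℂ) x m]; ring

lemma hasFDerivAt_main (γ : C2 →L[ℂ] C2) (hγ : IsSelfAdjoint γ)
    (g : ℝ → ℝ) (hg : ContDiff ℝ (⊤ : ℕ∞) g) (w : C2) :
    HasFDerivAt (fun w : C2 =>
        NormedSpace.exp (((g (QW.rinner2 w (γ w)) : ℝ) : ℂ) • Complex.I • γ) w)
      (((NormedSpace.exp (((g (QW.rinner2 w (γ w)) : ℝ) : ℂ) • Complex.I • γ)).restrictScalars ℝ).comp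
        (ContinuousLinearMap.id ℝ C2 +
          ((2 * deriv g (QW.rinner2 w (γ w))) •
            (Complex.reCLM.comp ((innerSL ℂ (γ w)).restrictScalars ℝ))).smulRight
            (Complex.I • γ w))) w := by
  set B : C2 →L[ℂ] C2 := Complex.I • γ with hB
  set f : C2 → ℝ := fun w => QW.rinner2 w (γ w) with hf
  have h1 : HasFDerivAt (fun w : C2 => (inner ℂ w (γ w) : ℂ))
      ((fderivInnerCLM ℂ (w, γ w)).comp
        ((ContinuousLinearMap.id ℝ C2).prod (γ.restrictScalars ℝ))) w := by
    exact HasFDerivAt.inner ℂ (hasFDerivAt_id w) (γ.restrictScalars ℝ).hasFDerivAt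
  set f3 : C2 →L[ℝ] ℝ := Complex.reCLM.comp ((fderivInnerCLM ℂ (w, γ w)).comp
        ((ContinuousLinearMap.id ℝ C2).prod (γ.restrictScalars ℝ))) with hf3
  have h2 : HasFDerivAt f f3 w := (Complex.reCLM.hasFDerivAt).comp w h1
  have hgd : HasDerivAt g (deriv g (f w)) (f w) :=
    ((hg.differentiable (by simp)) (f w)).hasDerivAt
  have h3 : HasFDerivAt (fun w : C2 => g (f w)) ((deriv g (f w)) • f3) w :=
    hgd.comp_hasFDerivAt w h2
  have h4 : HasFDerivAt (fun s : ℝ => NormedSpace.exp (s • B))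
      ((1 : ℝ →L[ℝ] ℝ).smulRight (NormedSpace.exp ((g (f w)) • B) * B)) (g (f w)) :=
    (hasDerivAt_exp_smul_const B (g (f w))).hasFDerivAt
  have h5 : HasFDerivAt (fun w : C2 => NormedSpace.exp ((g (f w)) • B))
      (((1 : ℝ →L[ℝ] ℝ).smulRight (NormedSpace.exp ((g (f w)) • B) * B)).comp
        ((deriv g (f w)) • f3)) w :=
    by exact h4.comp w h3
  set RL : (C2 →L[ℂ] C2) →L[ℝ] (C2 →L[ℝ] C2) :=
    ContinuousLinearMap.restrictScalarsL ℂ C2 C2 ℝ ℝ with hRL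
  have h7 := ((RL.hasFDerivAt.comp w h5).clm_apply (hasFDerivAt_id w))
  have h8 : HasFDerivAt (fun y : C2 =>
      NormedSpace.exp (((g (QW.rinner2 y (γ y)) : ℝ) : ℂ) • Complex.I • γ) y) _ w :=
    h7.congr_of_eventuallyEq (Filter.Eventually.of_forall fun y => by
      show NormedSpace.exp (((g (QW.rinner2 y (γ y)) : ℝ) : ℂ) • Complex.I • γ) y =
        (RL (NormedSpace.exp (g (f y) • B))) (_root_.id y)
      have hy : ((g (QW.rinner2 y (γ y)) : ℝ) : ℂ) • Complex.I • γ = (g (f y)) • B := by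
        simp only [hB, hf]
        exact coe_real_smul _ _
      rw [hy]
      rfl)
  refine h8.congr_fderiv ?_
  refine ContinuousLinearMap.ext fun u => ?_
  have hsym0 : ∀ a b : C2, (inner ℂ (γ a) b : ℂ) = inner ℂ a (γ b) := fun a b => hγ.isSymmetric a b
  have hsym : ((inner ℂ w (γ u) : ℂ)).re = ((inner ℂ u (γ w) : ℂ)).re := by
    rw [← hsym0 w u]
    have h := inner_re_symm (𝕜 := ℂ) (γ w) u
    simpa using h
  have hexp : NormedSpace.exp ((g (f w)) • B) =
      NormedSpace.exp (((g (QW.rinner2 w (γ w)) : ℝ) : ℂ) • Complex.I • γ) := by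
    have hy2 : ((g (QW.rinner2 w (γ w)) : ℝ) : ℂ) • Complex.I • γ = (g (f w)) • B := by
      simp only [hB, hf]
      exact coe_real_smul _ _
    rw [hy2]
  simp only [ContinuousLinearMap.comp_apply, ContinuousLinearMap.add_apply,
    ContinuousLinearMap.coe_id', id_eq, ContinuousLinearMap.smulRight_apply,
    ContinuousLinearMap.smul_apply, ContinuousLinearMap.flip_apply, hRL,
    ContinuousLinearMap.coe_restrict_scalarsL', ContinuousLinearMap.coe_restrictScalars',
    ContinuousLinearMap.one_apply, hf3, fderivInnerCLM_apply, hexp,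
    ContinuousLinearMap.prod_apply, ContinuousLinearMap.mul_apply, map_add, map_smul,
    Complex.reCLM_apply, innerSL_apply_apply, smul_eq_mul, mul_one, hB, Function.comp]
  set E := NormedSpace.exp (((g (QW.rinner2 w (γ w)) : ℝ) : ℂ) • Complex.I • γ) with hE
  have hsym1 : ((inner ℂ (γ w) u : ℂ)).re = ((inner ℂ u (γ w) : ℂ)).re := by
    have h := inner_re_symm (𝕜 := ℂ) (γ w) u
    simpa using h
  rw [hsym1, hsym]
  simp only [hf]
  congr 1
  ring_nf
  rw [hE, coe_real_smul]


end QWAux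

open QW in
/-- **Lemma (structure of the derivative of the nonlinear coin).**
Let `γ` be self-adjoint on `ℂ²`, `g ∈ C^∞(ℝ,ℝ)` with `g(0)=0`, and
`N(w) = e^{i g(⟨w,γw⟩)γ} w`.  With `A(w)u = 2g'(⟨w,γw⟩)⟨u,γw⟩ · iγw`:
(i) the ℝ-linear Fréchet derivative is `DN(w)u = e^{i g(⟨w,γw⟩)γ}(u + A(w)u)`;
(ii) `A(w)² = 0` and `DN(w)` is invertible with `DN(w)⁻¹ = (1 − A(w)) e^{−i g(⟨w,γw⟩)γ}`;
(iii) `⟨DN(w)u, iv⟩ = ⟨u, i DN(w)⁻¹ v⟩` for all `u,v ∈ ℂ²`. -/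
theorem nonlinear_coin_derivative
    (γ : C2 →L[ℂ] C2) (hγ : IsSelfAdjoint γ)
    (g : ℝ → ℝ) (hg : ContDiff ℝ (⊤ : ℕ∞) g) (hg0 : g 0 = 0) (w : C2) :
    ∃ D : C2 →L[ℝ] C2,
      HasFDerivAt (QW.Ncoin γ g) D w ∧
      (∀ u : C2, D u = QW.phase γ g w
          (u + (2 * deriv g (QW.rinner2 w (γ w)) * QW.rinner2 u (γ w)) • (Complex.I • γ w))) ∧
      (∀ u : C2,
        (2 * deriv g (QW.rinner2 w (γ w)) *
            QW.rinner2 ((2 * deriv g (QW.rinner2 w (γ w)) * QW.rinner2 u (γ w)) •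
              (Complex.I • γ w)) (γ w)) • (Complex.I • γ w) = 0) ∧
      (∀ v : C2,
        D (NormedSpace.exp (-(((g (QW.rinner2 w (γ w)) : ℝ) : ℂ) • Complex.I • γ)) v -
            (2 * deriv g (QW.rinner2 w (γ w)) *
              QW.rinner2 (NormedSpace.exp
                (-(((g (QW.rinner2 w (γ w)) : ℝ) : ℂ) • Complex.I • γ)) v) (γ w)) •
              (Complex.I • γ w)) = v) ∧
      (∀ u : C2,
        NormedSpace.exp (-(((g (QW.rinner2 w (γ w)) : ℝ) : ℂ) • Complex.I • γ)) (D u) -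
            (2 * deriv g (QW.rinner2 w (γ w)) *
              QW.rinner2 (NormedSpace.exp
                (-(((g (QW.rinner2 w (γ w)) : ℝ) : ℂ) • Complex.I • γ)) (D u)) (γ w)) •
              (Complex.I • γ w) = u) ∧
      (∀ u v : C2,
        QW.rinner2 (D u) (Complex.I • v) =
          QW.rinner2 u (Complex.I •
            (NormedSpace.exp (-(((g (QW.rinner2 w (γ w)) : ℝ) : ℂ) • Complex.I • γ)) v -
              (2 * deriv g (QW.rinner2 w (γ w)) *
                QW.rinner2 (NormedSpace.exp
                  (-(((g (QW.rinner2 w (γ w)) : ℝ) : ℂ) • Complex.I • γ)) v) (γ w)) •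
                (Complex.I • γ w)))) := by
  classical
  set t : ℝ := QW.rinner2 w (γ w) with ht
  set ξ : C2 := Complex.I • γ w with hξ
  set c : ℝ := 2 * deriv g t with hc
  set X : C2 →L[ℂ] C2 := ((g t : ℝ) : ℂ) • Complex.I • γ with hX
  set F : C2 →L[ℝ] ℝ := Complex.reCLM.comp ((innerSL ℂ (γ w)).restrictScalars ℝ) with hF
  set D : C2 →L[ℝ] C2 := ((NormedSpace.exp X).restrictScalars ℝ).comp
    (ContinuousLinearMap.id ℝ C2 + (c • F).smulRight ξ) with hD
  have hphase : QW.phase γ g w = NormedSpace.exp X := rfl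
  have hstar : star X = -X := QWAux.star_smul_I_gamma γ hγ (g t)
  have hDu : ∀ u : C2, D u = NormedSpace.exp X (u + (c * QW.rinner2 u (γ w)) • ξ) := by
    intro u
    simp only [hD, ContinuousLinearMap.comp_apply, ContinuousLinearMap.coe_restrictScalars',
      ContinuousLinearMap.add_apply, ContinuousLinearMap.coe_id', id_eq,
      ContinuousLinearMap.smulRight_apply, ContinuousLinearMap.smul_apply, smul_eq_mul, hF,
      Complex.reCLM_apply, innerSL_apply_apply]
    rw [QWAux.rinner2_symm]
  have hA2 : ∀ s : ℝ, QW.rinner2 (s • ξ) (γ w) = 0 := by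
    intro s
    rw [hξ, QWAux.rinner2_smul_left, QWAux.rinner2_I_smul_self, mul_zero]
  refine ⟨D, ?_, ?_, ?_, ?_, ?_, ?_⟩
  · exact QWAux.hasFDerivAt_main γ hγ g hg w
  · intro u
    rw [hDu u, hphase]
  · intro u
    rw [hA2, mul_zero, zero_smul]
  · intro v
    set m : C2 := NormedSpace.exp (-X) v with hm
    rw [hDu]
    have h2 : (m - (c * QW.rinner2 m (γ w)) • ξ) +
        (c * QW.rinner2 (m - (c * QW.rinner2 m (γ w)) • ξ) (γ w)) • ξ = m := by
      rw [QWAux.rinner2_sub_left, hA2, sub_zero]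
      module
    rw [h2, hm]
    exact QWAux.exp_apply_neg X v
  · intro u
    have h1 : NormedSpace.exp (-X) (D u) = u + (c * QW.rinner2 u (γ w)) • ξ := by
      rw [hDu]
      exact QWAux.exp_neg_apply X _
    rw [h1, QWAux.rinner2_add_left, hA2, add_zero]
    module
  · intro u v
    have h1 : QW.rinner2 (D u) (Complex.I • v) =
        QW.rinner2 (u + (c * QW.rinner2 u (γ w)) • ξ)
          (Complex.I • NormedSpace.exp (-X) v) := by
      rw [hDu]
      unfold QW.rinner2
      rw [QWAux.exp_inner X hstar]
      rw [map_smul]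
    rw [h1, hξ]
    exact QWAux.key_inner (γ w) u (NormedSpace.exp (-X) v) c
end
end

section
/- Let U be a unitary operator on a Hilbert space H and A ∈ L(H) with adjoint A*. If sup_{Im μ ≠ 0} ‖A R_U(μ) A*‖_{L(H)} < ∞, then A is U-smooth; in particular there is a constant C such that Σ_{t∈Z} ‖A U^t φ‖²_H ≤ C ‖φ‖²_H for all φ ∈ H. -/
/-!
For `ε > 0` the two resolvents at `-θ ± εi` are Neumann series in `U` and `U⁻¹`, and their
difference is the operator Poisson kernel `∑ₙ e^{-ε|n|} e^{inθ} Uⁿ`. So `θ ↦ A (R₊ - R₋) A*`,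
bounded by `2M`, is the symbol of the block Toeplitz matrix `(e^{-ε|s-t|} A U^{s-t} A*)_{s,t}`.
Testing it against `∑ₜ e^{itθ} gₜ` and using Parseval on the circle bounds the Toeplitz form by
`2M ∑ ‖gₜ‖²`; letting `ε → 0` bounds `∑ₛₜ ⟪gₛ, A U^{s-t} A* gₜ⟫ = ‖∑ₜ U^{-t} A* gₜ‖²`. This is the
`T T*` bound for `T φ = (A U^t φ)ₜ`, and by duality `‖T‖² ≤ 2M`.
-/

noncomputable section

open scoped ENNReal NNReal
open Complex

namespace KS

variable {H : Type*} [NormedAddCommGroup H] [InnerProductSpace ℂ H] [CompleteSpace H]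

/-- `Res` is the resolvent family of the unitary `U`:
for `Im μ ≠ 0`, `Res μ = (Ue^{−iμ} − 1)⁻¹`. -/
def IsResolventFamily (U : H ≃ₗᵢ[ℂ] H) (Res : ℂ → H →L[ℂ] H) : Prop :=
  ∀ μ : ℂ, μ.im ≠ 0 →
    (∀ φ : H, Complex.exp (-μ * Complex.I) • U (Res μ φ) - Res μ φ = φ) ∧
    (∀ φ : H, Res μ (Complex.exp (-μ * Complex.I) • U φ - φ) = φ)

end KS

open intervalIntegral
open scoped Real InnerProductSpace

section Fourier

lemma norm_exp_int_mul_I (k : ℤ) (θ : ℝ) : ‖exp (k * θ * I)‖ = 1 := by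
  rw [show (k : ℂ) * θ * I = ((k * θ : ℝ) : ℂ) * I by push_cast; ring, norm_exp_ofReal_mul_I]

lemma integral_exp_int_mul_I (k : ℤ) :
    ∫ θ in (0 : ℝ)..2 * π, exp (k * θ * I) = if k = 0 then ((2 * π : ℝ) : ℂ) else 0 := by
  split_ifs with hk
  · simp [hk]
  · have hkI : (k : ℂ) * I ≠ 0 := by simp [hk]
    simp_rw [show ∀ θ : ℝ, (k : ℂ) * θ * I = k * I * θ from fun θ => by ring]
    rw [integral_exp_mul_complex hkI,
      show (k : ℂ) * I * ((2 * π : ℝ) : ℂ) = k * (2 * π * I) by push_cast; ring]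
    simp [exp_int_mul_two_pi_mul_I]

variable {a : ℤ → ℂ} {f : ℝ → ℂ}

lemma continuous_of_hasSum_exp_mul (ha : Summable (‖a ·‖))
    (hf : ∀ θ : ℝ, HasSum (fun n : ℤ => exp (n * θ * I) * a n) (f θ)) : Continuous f := by
  rw [show f = fun θ : ℝ => ∑' n : ℤ, exp (n * θ * I) * a n from
    funext fun θ => (hf θ).tsum_eq.symm]
  exact continuous_tsum (fun n => by fun_prop) ha fun n θ => by
    rw [norm_mul, norm_exp_int_mul_I, one_mul]

lemma integral_exp_neg_mul_of_hasSum (ha : Summable (‖a ·‖))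
    (hf : ∀ θ : ℝ, HasSum (fun n : ℤ => exp (n * θ * I) * a n) (f θ)) (m : ℤ) :
    ∫ θ in (0 : ℝ)..2 * π, exp (-(m * θ * I)) * f θ = 2 * π * a m := by
  have hexp (n : ℤ) (θ : ℝ) :
      exp (-(m * θ * I)) * exp (n * θ * I) = exp ((n - m : ℤ) * θ * I) := by
    rw [← Complex.exp_add]; push_cast; ring_nf
  have hsum := hasSum_integral_of_dominated_convergence (μ := MeasureTheory.volume)
    (a := 0) (b := 2 * π) (fun n _ => ‖a n‖) (fun n => by fun_prop)
    (fun n => .of_forall fun θ _ => by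
      rw [← mul_assoc, hexp, norm_mul, norm_exp_int_mul_I, one_mul])
    (.of_forall fun _ _ => ha) intervalIntegrable_const
    (.of_forall fun θ _ => (hf θ).mul_left (exp (-(m * θ * I))))
  have hterm (n : ℤ) : ∫ θ in (0 : ℝ)..2 * π, exp (-(m * θ * I)) * (exp (n * θ * I) * a n)
      = if n = m then 2 * π * a m else 0 := by
    simp_rw [← mul_assoc, hexp, integral_mul_const, integral_exp_int_mul_I, sub_eq_zero]
    split_ifs with h <;> simp [h]
  simp_rw [hterm] at hsum
  exact hsum.unique (hasSum_ite_eq m _)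

lemma summable_exp_neg_mul_abs {ε : ℝ} (hε : 0 < ε) :
    Summable fun n : ℤ => Real.exp (-ε * |(n : ℝ)|) := by
  have h : Summable fun n : ℕ => Real.exp (-ε * |(n : ℝ)|) := by
    simpa [mul_comm] using Real.summable_exp_nat_mul_iff.mpr (neg_lt_zero.mpr hε)
  exact .of_nat_of_neg (by simpa using h) (by simpa using h)

end Fourier

section Toeplitz

variable {E : Type*} [NormedAddCommGroup E] [InnerProductSpace ℂ E] {c : ℤ → E →L[ℂ] E}

lemma inner_sum_exp_smul_apply (X : E →L[ℂ] E) (T : Finset ℤ) (g : ℤ → E) (θ : ℝ) :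
    ⟪∑ t ∈ T, exp (t * θ * I) • g t, X (∑ t ∈ T, exp (t * θ * I) • g t)⟫_ℂ
      = ∑ s ∈ T, ∑ t ∈ T, exp (-((s - t : ℤ) * θ * I)) * ⟪g s, X (g t)⟫_ℂ := by
  simp_rw [map_sum, map_smul, sum_inner, inner_sum, inner_smul_left, inner_smul_right,
    ← mul_assoc, ← exp_conj, ← Complex.exp_add]
  congr! 4
  simp [conj_ofReal]
  ring

lemma summable_norm_inner_apply (hc : Summable (‖c ·‖)) (x y : E) :
    Summable fun n => ‖⟪x, c n y⟫_ℂ‖ := by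
  refine .of_nonneg_of_le (fun _ => norm_nonneg _) (fun n => ?_)
    ((hc.mul_left ‖x‖).mul_right ‖y‖)
  calc ‖⟪x, c n y⟫_ℂ‖ ≤ ‖x‖ * ‖c n y‖ := norm_inner_le_norm _ _
    _ ≤ ‖x‖ * ‖c n‖ * ‖y‖ := by rw [mul_assoc]; gcongr; exact (c n).le_opNorm y

lemma integral_inner_toeplitz {K : ℝ → E →L[ℂ] E} (hc : Summable (‖c ·‖))
    (hK : ∀ θ : ℝ, HasSum (fun n : ℤ => exp (n * θ * I) • c n) (K θ))
    (T : Finset ℤ) (g : ℤ → E) :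
    ∫ θ in (0 : ℝ)..2 * π,
        ⟪∑ t ∈ T, exp (t * θ * I) • g t, K θ (∑ t ∈ T, exp (t * θ * I) • g t)⟫_ℂ
      = 2 * π * ∑ s ∈ T, ∑ t ∈ T, ⟪g s, c (s - t) (g t)⟫_ℂ := by
  have hinner (x y : E) (θ : ℝ) :
      HasSum (fun n : ℤ => exp (n * θ * I) * ⟪x, c n y⟫_ℂ) ⟪x, K θ y⟫_ℂ := by
    simpa [inner_smul_right] using
      ((innerSL ℂ x).comp (ContinuousLinearMap.apply ℂ E y)).hasSum (hK θ)
  have hcont (s t : ℤ) :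
      Continuous fun θ : ℝ => exp (-((s - t : ℤ) * θ * I)) * ⟪g s, K θ (g t)⟫_ℂ :=
    (by fun_prop : Continuous fun θ : ℝ => exp (-((s - t : ℤ) * θ * I))).mul
      (continuous_of_hasSum_exp_mul (summable_norm_inner_apply hc _ _) (hinner _ _))
  simp_rw [inner_sum_exp_smul_apply]
  rw [integral_finsetSum fun s _ =>
      (continuous_finsetSum _ fun t _ => hcont s t).intervalIntegrable _ _, Finset.mul_sum]
  refine Finset.sum_congr rfl fun s _ => ?_
  rw [integral_finsetSum fun t _ => (hcont s t).intervalIntegrable _ _, Finset.mul_sum]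
  exact Finset.sum_congr rfl fun t _ =>
    integral_exp_neg_mul_of_hasSum (summable_norm_inner_apply hc _ _) (hinner _ _) _

/-- Parseval's identity, as the case of the constant symbol `1` of `integral_inner_toeplitz`. -/
lemma integral_norm_sq_sum_exp_smul (T : Finset ℤ) (g : ℤ → E) :
    ∫ θ in (0 : ℝ)..2 * π, ‖∑ t ∈ T, exp (t * θ * I) • g t‖ ^ 2
      = 2 * π * ∑ t ∈ T, ‖g t‖ ^ 2 := by
  have hK (θ : ℝ) :
      HasSum (fun n : ℤ => exp (n * θ * I) • if n = 0 then (1 : E →L[ℂ] E) else 0) 1 := by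
    convert hasSum_ite_eq (0 : ℤ) (1 : E →L[ℂ] E) using 2 with n
    split_ifs with hn <;> simp [hn]
  have hc : Summable fun n : ℤ => ‖if n = 0 then (1 : E →L[ℂ] E) else 0‖ := by
    simpa [apply_ite] using (hasSum_ite_eq (0 : ℤ) ‖(1 : E →L[ℂ] E)‖).summable
  have hdiag : ∑ s ∈ T, ∑ t ∈ T, ⟪g s, (if s - t = 0 then (1 : E →L[ℂ] E) else 0) (g t)⟫_ℂ
      = ∑ s ∈ T, ((‖g s‖ ^ 2 : ℝ) : ℂ) := Finset.sum_congr rfl fun s hs => by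
    simp_rw [sub_eq_zero, apply_ite (DFunLike.coe : (E →L[ℂ] E) → E → E), ite_apply]
    rw [← inner_sum]
    simp [Finset.sum_ite_eq, hs, inner_self_eq_norm_sq_to_K]
  have h := integral_inner_toeplitz hc hK T g
  simp only [hdiag, one_apply_eq_self, inner_self_eq_norm_sq_to_K] at h
  apply ofReal_injective
  rw [← intervalIntegral.integral_ofReal]
  exact_mod_cast h

theorem norm_sum_inner_toeplitz_le {K : ℝ → E →L[ℂ] E} (hc : Summable (‖c ·‖))
    (hK : ∀ θ : ℝ, HasSum (fun n : ℤ => exp (n * θ * I) • c n) (K θ)) {M : ℝ}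
    (hM : ∀ θ, ‖K θ‖ ≤ M) (T : Finset ℤ) (g : ℤ → E) :
    ‖∑ s ∈ T, ∑ t ∈ T, ⟪g s, c (s - t) (g t)⟫_ℂ‖ ≤ M * ∑ t ∈ T, ‖g t‖ ^ 2 := by
  set G : ℝ → E := fun θ => ∑ t ∈ T, exp (t * θ * I) • g t
  have hbound (θ : ℝ) : ‖⟪G θ, K θ (G θ)⟫_ℂ‖ ≤ M * ‖G θ‖ ^ 2 :=
    calc ‖⟪G θ, K θ (G θ)⟫_ℂ‖ ≤ ‖G θ‖ * (‖K θ‖ * ‖G θ‖) :=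
          (norm_inner_le_norm _ _).trans (by gcongr; exact (K θ).le_opNorm _)
      _ ≤ M * ‖G θ‖ ^ 2 := by nlinarith [hM θ, sq_nonneg ‖G θ‖, norm_nonneg (G θ)]
  have h2π : (0 : ℝ) < 2 * π := by positivity
  refine le_of_mul_le_mul_left ?_ h2π
  calc 2 * π * ‖∑ s ∈ T, ∑ t ∈ T, ⟪g s, c (s - t) (g t)⟫_ℂ‖
      = ‖∫ θ in (0 : ℝ)..2 * π, ⟪G θ, K θ (G θ)⟫_ℂ‖ := by
        rw [integral_inner_toeplitz hc hK, norm_mul]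
        simp [abs_of_pos Real.pi_pos]
    _ ≤ ∫ θ in (0 : ℝ)..2 * π, M * ‖G θ‖ ^ 2 :=
        norm_integral_le_of_norm_le h2π.le (.of_forall fun θ _ => hbound θ)
          (Continuous.intervalIntegrable (by fun_prop) _ _)
    _ = 2 * π * (M * ∑ t ∈ T, ‖g t‖ ^ 2) := by
        rw [integral_const_mul, integral_norm_sq_sum_exp_smul]; ring

theorem norm_sum_inner_toeplitz_le_of_abel {C : ℝ} (hc : ∀ n, ‖c n‖ ≤ C)
    {K : ℝ → ℝ → E →L[ℂ] E}
    (hK : ∀ ε > 0, ∀ θ : ℝ,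
      HasSum (fun n : ℤ => exp (n * θ * I) • ((Real.exp (-ε * |(n : ℝ)|) : ℂ) • c n)) (K ε θ))
    {M : ℝ} (hM : ∀ ε > 0, ∀ θ, ‖K ε θ‖ ≤ M) (T : Finset ℤ) (g : ℤ → E) :
    ‖∑ s ∈ T, ∑ t ∈ T, ⟪g s, c (s - t) (g t)⟫_ℂ‖ ≤ M * ∑ t ∈ T, ‖g t‖ ^ 2 := by
  set Q : ℝ → ℂ := fun ε => ∑ s ∈ T, ∑ t ∈ T,
    (Real.exp (-ε * |((s - t : ℤ) : ℝ)|) : ℂ) * ⟪g s, c (s - t) (g t)⟫_ℂ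
  have hQ : Continuous Q := by fun_prop
  have hQ0 : Q 0 = ∑ s ∈ T, ∑ t ∈ T, ⟪g s, c (s - t) (g t)⟫_ℂ := by simp [Q]
  have hQε (ε : ℝ) (hε : 0 < ε) : ‖Q ε‖ ≤ M * ∑ t ∈ T, ‖g t‖ ^ 2 := by
    have hsum : Summable fun n : ℤ => ‖(Real.exp (-ε * |(n : ℝ)|) : ℂ) • c n‖ :=
      .of_nonneg_of_le (fun _ => norm_nonneg _) (fun n => by
          rw [norm_smul, norm_real, Real.norm_of_nonneg (Real.exp_pos _).le]
          exact mul_le_mul_of_nonneg_left (hc n) (Real.exp_pos _).le)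
        ((summable_exp_neg_mul_abs hε).mul_right C)
    simpa [Q, inner_smul_right] using norm_sum_inner_toeplitz_le hsum (hK ε hε) (hM ε hε) T g
  rw [← hQ0]
  exact le_of_tendsto ((hQ.tendsto 0).mono_left (nhdsWithin_le_nhds (s := Set.Ioi 0))).norm
    (eventually_nhdsWithin_of_forall hQε)

end Toeplitz

open ContinuousLinearMap in
theorem sum_norm_sq_le_of_norm_sum_inner_comp_adjoint_le {𝕜 E F ι : Type*} [RCLike 𝕜]
    [NormedAddCommGroup E] [InnerProductSpace 𝕜 E] [CompleteSpace E]
    [NormedAddCommGroup F] [InnerProductSpace 𝕜 F] [CompleteSpace F]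
    (B : ι → E →L[𝕜] F) (T : Finset ι) {C : ℝ} (hC : 0 ≤ C)
    (h : ∀ g : ι → F, ‖∑ s ∈ T, ∑ t ∈ T, ⟪g s, (B s ∘L adjoint (B t)) (g t)⟫_𝕜‖
      ≤ C * ∑ t ∈ T, ‖g t‖ ^ 2) (φ : E) :
    ∑ t ∈ T, ‖B t φ‖ ^ 2 ≤ C * ‖φ‖ ^ 2 := by
  set S := ∑ t ∈ T, ‖B t φ‖ ^ 2
  set v := ∑ t ∈ T, adjoint (B t) (B t φ)
  have hv : ‖v‖ ^ 2 ≤ C * S := by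
    have hvv : ⟪v, v⟫_𝕜 = ∑ s ∈ T, ∑ t ∈ T, ⟪B s φ, (B s ∘L adjoint (B t)) (B t φ)⟫_𝕜 := by
      simp only [v, sum_inner, inner_sum, adjoint_inner_left, comp_apply]
      exact Finset.sum_comm
    calc ‖v‖ ^ 2 = ‖⟪v, v⟫_𝕜‖ := by simp [inner_self_eq_norm_sq_to_K]
      _ ≤ C * S := hvv ▸ h fun t => B t φ
  have hS : S ≤ ‖v‖ * ‖φ‖ :=
    calc S = RCLike.re ⟪v, φ⟫_𝕜 := by
          simp [S, v, sum_inner, adjoint_inner_left, inner_self_eq_norm_sq_to_K]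
      _ ≤ ‖⟪v, φ⟫_𝕜‖ := RCLike.re_le_norm _
      _ ≤ ‖v‖ * ‖φ‖ := norm_inner_le_norm _ _
  have hS0 : 0 ≤ S := Finset.sum_nonneg fun t _ => sq_nonneg _
  rcases hS0.eq_or_lt with hS0 | hS0
  · rw [← hS0]; positivity
  · nlinarith [mul_pow ‖v‖ ‖φ‖ 2, pow_le_pow_left₀ hS0.le hS 2, sq_nonneg ‖φ‖]

lemma tsum_nnnorm_sq_le_of_sum_norm_sq_le {ι E : Type*} [SeminormedAddCommGroup E]
    (f : ι → E) (C : ℝ≥0) (h : ∀ T : Finset ι, ∑ t ∈ T, ‖f t‖ ^ 2 ≤ C) :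
    ∑' t, (‖f t‖₊ : ℝ≥0∞) ^ 2 ≤ C := by
  rw [ENNReal.tsum_eq_iSup_sum]
  refine iSup_le fun T => ?_
  have hT : ∑ t ∈ T, ‖f t‖₊ ^ 2 ≤ C := by
    rw [← NNReal.coe_le_coe]; push_cast; exact h T
  exact_mod_cast hT

namespace KS

variable {H : Type*} [NormedAddCommGroup H] [InnerProductSpace ℂ H]

lemma _root_.LinearIsometryEquiv.coe_pow_toContinuousLinearMap (U : H ≃ₗᵢ[ℂ] H) (n : ℕ) :
    ((U ^ n : H ≃ₗᵢ[ℂ] H) : H →L[ℂ] H) = (U : H →L[ℂ] H) ^ n := by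
  induction n with
  | zero => rfl
  | succ n ih => rw [pow_succ, pow_succ, ← ih]; rfl

lemma _root_.LinearIsometryEquiv.norm_toContinuousLinearMap_le (U : H ≃ₗᵢ[ℂ] H) :
    ‖(U : H →L[ℂ] H)‖ ≤ 1 :=
  ContinuousLinearMap.opNorm_le_bound _ zero_le_one fun x => by simp

lemma norm_mul_coe_mul_le (A B : H →L[ℂ] H) (U : H ≃ₗᵢ[ℂ] H) :
    ‖A * (U : H →L[ℂ] H) * B‖ ≤ ‖A‖ * ‖B‖ :=
  calc ‖A * (U : H →L[ℂ] H) * B‖ ≤ ‖A‖ * ‖(U : H →L[ℂ] H)‖ * ‖B‖ := norm_mul₃_le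
    _ ≤ ‖A‖ * 1 * ‖B‖ := by gcongr; exact U.norm_toContinuousLinearMap_le
    _ = ‖A‖ * ‖B‖ := by rw [mul_one]

lemma norm_exp_smul_lt_one {z : ℂ} (U : H ≃ₗᵢ[ℂ] H) (hz : z.re < 0) :
    ‖exp z • (U : H →L[ℂ] H)‖ < 1 :=
  calc ‖exp z • (U : H →L[ℂ] H)‖ ≤ ‖exp z‖ * 1 :=
        (norm_smul_le (exp z) (U : H →L[ℂ] H)).trans
          (mul_le_mul_of_nonneg_left U.norm_toContinuousLinearMap_le (norm_nonneg _))
    _ < 1 := by rw [mul_one, norm_exp, Real.exp_lt_one_iff]; exact hz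

variable {U : H ≃ₗᵢ[ℂ] H} {Res : ℂ → H →L[ℂ] H}

lemma IsResolventFamily.mul_exp_smul_sub_one (hRes : IsResolventFamily U Res) {μ : ℂ}
    (hμ : μ.im ≠ 0) : Res μ * (exp (-μ * I) • (U : H →L[ℂ] H) - 1) = 1 := by
  ext φ
  simpa using (hRes μ hμ).2 φ

variable [CompleteSpace H]

lemma mul_coe_zpow_comp_adjoint (A : H →L[ℂ] H) (U : H ≃ₗᵢ[ℂ] H) (s t : ℤ) :
    (A * ((U ^ s : H ≃ₗᵢ[ℂ] H) : H →L[ℂ] H)) ∘L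
        ContinuousLinearMap.adjoint (A * ((U ^ t : H ≃ₗᵢ[ℂ] H) : H →L[ℂ] H))
      = A * ((U ^ (s - t) : H ≃ₗᵢ[ℂ] H) : H →L[ℂ] H) * ContinuousLinearMap.adjoint A := by
  simp only [ContinuousLinearMap.mul_def]
  rw [ContinuousLinearMap.adjoint_comp, LinearIsometryEquiv.adjoint_eq_symm, zpow_sub,
    ← LinearIsometryEquiv.inv_def]
  rfl

lemma IsResolventFamily.hasSum_of_im_neg (hRes : IsResolventFamily U Res) {μ : ℂ}
    (hμ : μ.im < 0) :
    HasSum (fun n : ℕ => (exp (-μ * I) • (U : H →L[ℂ] H)) ^ n) (-Res μ) := by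
  set x := exp (-μ * I) • (U : H →L[ℂ] H)
  have hx : ‖x‖ < 1 := norm_exp_smul_lt_one U (by simpa using hμ)
  have hinv : (x - 1) * -∑' n : ℕ, x ^ n = 1 := by
    rw [mul_neg, ← neg_mul, neg_sub, mul_neg_geom_series x hx]
  rw [left_inv_eq_right_inv (hRes.mul_exp_smul_sub_one hμ.ne) hinv, neg_neg]
  exact (summable_geometric_of_norm_lt_one hx).hasSum

lemma IsResolventFamily.hasSum_of_im_pos (hRes : IsResolventFamily U Res) {μ : ℂ}
    (hμ : 0 < μ.im) :
    HasSum (fun n : ℕ => (exp (μ * I) • (U.symm : H →L[ℂ] H)) ^ (n + 1)) (Res μ) := by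
  set y := exp (μ * I) • (U.symm : H →L[ℂ] H)
  have hy : ‖y‖ < 1 := norm_exp_smul_lt_one U.symm (by simpa using hμ)
  have hxy : (exp (-μ * I) • (U : H →L[ℂ] H) - 1) * y = 1 - y := by
    rw [sub_mul, one_mul, smul_mul_smul_comm, ← Complex.exp_add, neg_mul, neg_add_cancel,
      exp_zero, one_smul]
    congr 1
    ext φ
    simp
  have hinv : (exp (-μ * I) • (U : H →L[ℂ] H) - 1) * (y * ∑' n : ℕ, y ^ n) = 1 := by
    rw [← mul_assoc, hxy, mul_neg_geom_series y hy]
  rw [left_inv_eq_right_inv (hRes.mul_exp_smul_sub_one hμ.ne') hinv]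
  simpa only [pow_succ'] using (summable_geometric_of_norm_lt_one hy).hasSum.mul_left y

lemma IsResolventFamily.hasSum_poisson (hRes : IsResolventFamily U Res) {ε : ℝ} (hε : 0 < ε)
    (θ : ℝ) :
    HasSum (fun n : ℤ => exp (n * θ * I) •
        ((Real.exp (-ε * |(n : ℝ)|) : ℂ) • ((U ^ n : H ≃ₗᵢ[ℂ] H) : H →L[ℂ] H)))
      (Res (-θ + ε * I) - Res (-θ - ε * I)) := by
  have hin := hRes.hasSum_of_im_neg (μ := -θ - ε * I) (by simpa using hε)
  have hout := hRes.hasSum_of_im_pos (μ := -θ + ε * I) (by simpa using hε)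
  rw [sub_eq_neg_add]
  refine .of_nat_of_neg_add_one (hin.congr_fun fun n => ?_) (hout.congr_fun fun n => ?_)
  · rw [smul_smul, zpow_natCast, U.coe_pow_toContinuousLinearMap, smul_pow, ← exp_nat_mul,
      ofReal_exp, ← Complex.exp_add]
    congr 2
    push_cast
    rw [abs_of_nonneg (by positivity)]
    linear_combination (-(n : ℂ) * ε) * I_sq
  · rw [smul_smul, zpow_neg, ← inv_zpow, LinearIsometryEquiv.inv_def, ← Nat.cast_succ,
      zpow_natCast, U.symm.coe_pow_toContinuousLinearMap, smul_pow, ← exp_nat_mul, ofReal_exp,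
      ← Complex.exp_add]
    congr 2
    push_cast
    rw [abs_of_nonpos (by linarith)]
    push_cast
    linear_combination (-((n : ℂ) + 1) * ε) * I_sq

end KS

open KS in
/-- **Corollary (sufficient condition for Kato smoothness).**
Let `U` be unitary on a Hilbert space `H`, `A ∈ L(H)`.
If `sup_{Im μ ≠ 0} ‖A R_U(μ) A*‖ < ∞`, then `A` is `U`-smooth: there is a constant `C`
with `Σ_{t∈ℤ} ‖AU^tφ‖² ≤ C‖φ‖²` for all `φ ∈ H`. -/
theorem kato_smoothness_sufficient_condition
    {H : Type*} [NormedAddCommGroup H] [InnerProductSpace ℂ H] [CompleteSpace H]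
    (U : H ≃ₗᵢ[ℂ] H) (A : H →L[ℂ] H)
    (Res : ℂ → H →L[ℂ] H) (hRes : KS.IsResolventFamily U Res)
    (hbound : ∃ M : ℝ, ∀ μ : ℂ, μ.im ≠ 0 →
      ‖A ∘L Res μ ∘L ContinuousLinearMap.adjoint A‖ ≤ M) :
    ∃ C : ℝ≥0, ∀ φ : H,
      (∑' t : ℤ, (‖A ((U ^ t) φ)‖₊ : ℝ≥0∞) ^ 2) ≤ (C : ℝ≥0∞) * (‖φ‖₊ : ℝ≥0∞) ^ 2 := by
  obtain ⟨M, hM⟩ := hbound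
  have hM0 : 0 ≤ M := (norm_nonneg _).trans (hM I (by simp))
  set A' := ContinuousLinearMap.adjoint A
  have hK (ε : ℝ) (hε : 0 < ε) (θ : ℝ) : HasSum (fun n : ℤ => exp (n * θ * I) •
        ((Real.exp (-ε * |(n : ℝ)|) : ℂ) • (A * ((U ^ n : H ≃ₗᵢ[ℂ] H) : H →L[ℂ] H) * A')))
      (A * (Res (-θ + ε * I) - Res (-θ - ε * I)) * A') := by
    simpa only [mul_smul_comm, smul_mul_assoc] using
      ((hRes.hasSum_poisson hε θ).mul_left A).mul_right A'
  have hKM (ε : ℝ) (hε : 0 < ε) (θ : ℝ) :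
      ‖A * (Res (-θ + ε * I) - Res (-θ - ε * I)) * A'‖ ≤ 2 * M := by
    rw [mul_sub, sub_mul, two_mul]
    exact (norm_sub_le _ _).trans (add_le_add (hM _ (by simp [hε.ne'])) (hM _ (by simp [hε.ne'])))
  refine ⟨(2 * M).toNNReal, fun φ => tsum_nnnorm_sq_le_of_sum_norm_sq_le _ _ fun T => ?_⟩
  rw [NNReal.coe_mul, Real.coe_toNNReal _ (by positivity)]
  refine sum_norm_sq_le_of_norm_sum_inner_comp_adjoint_le
    (fun t => A * ((U ^ t : H ≃ₗᵢ[ℂ] H) : H →L[ℂ] H)) T (by positivity) (fun g => ?_) φ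
  simpa only [mul_coe_zpow_comp_adjoint] using
    norm_sum_inner_toeplitz_le_of_abel (fun n => norm_mul_coe_mul_le A A' (U ^ n)) hK hKM T g
end
end

section
/- Let U be a unitary operator on a Hilbert space H and for Im μ ≠ 0 set R(μ) := (Ue^{−iμ} − 1)^{−1}. Then for all λ ∈ R and ε ∈ R with ε ≠ 0: R(λ+iε) − R(λ−iε) = (1 − e^{−2ε}) R(λ−iε)* R(λ−iε). In particular, if ε > 0 then R(λ+iε) − R(λ−iε) is a nonnegative self-adjoint operator. -/
noncomputable section

open Complex

/-!
Write `V` for `U` as an operator, `B = R(λ - iε) = (cV - 1)⁻¹` and `A = R(λ + iε) = (dV - 1)⁻¹`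
with `c = e^{-i(λ - iε)}`, `d = e^{-i(λ + iε)}`, so that `c̄ d = 1` and `|c|² = e^{-2ε}`.
Taking adjoints, `B* = (c̄V* - 1)⁻¹`, and since `V*V = 1` one finds `A = -c̄ B* V*`. Hence
`A - B = B* (-c̄ V* (cV - 1) - (c̄V* - 1)) B = (1 - |c|²) B* B`,
which is a nonnegative multiple of the positive operator `B* B` when `ε > 0`.
-/

open scoped ComplexOrder ComplexConjugate

theorem sub_eq_smul_star_mul_of_mul_eq_one {R : Type*} [Ring R] [StarRing R] [Algebra ℂ R]
    [StarModule ℂ R] {v a b : R} {c d : ℂ} (hv : star v * v = 1) (hcd : star c * d = 1)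
    (ha : (d • v - 1) * a = 1) (hb : (c • v - 1) * b = 1) :
    a - b = (1 - star c * c) • (star b * b) := by
  have hb' : star b * (star c • star v - 1) = 1 := by
    simpa only [star_mul, star_sub, star_smul, star_one] using congrArg star hb
  have hd : -star c • (star v * (d • v - 1)) = star c • star v - 1 := by
    rw [mul_sub, mul_smul_comm, hv, mul_one]
    linear_combination (norm := module) -(hcd • (1 : R))
  have hc : -star c • (star v * (c • v - 1)) - (star c • star v - 1) =
      (1 - star c * c) • 1 := by
    rw [mul_sub, mul_smul_comm, hv, mul_one]
    module
  have ha_eq : a = -star c • (star b * star v) :=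
    calc a = star b * (star c • star v - 1) * a := by rw [hb', one_mul]
      _ = -star c • (star b * star v) * ((d • v - 1) * a) := by
        rw [← hd]; simp only [smul_mul_assoc, mul_smul_comm, mul_assoc]
      _ = -star c • (star b * star v) := by rw [ha, mul_one]
  calc a - b = -star c • (star b * star v) * ((c • v - 1) * b)
        - star b * (star c • star v - 1) * b := by rw [← ha_eq, hb, hb', mul_one, one_mul]
    _ = star b * ((1 - star c * c) • 1) * b := by
        rw [← hc]
        simp only [smul_mul_assoc, mul_smul_comm, mul_assoc, mul_sub, sub_mul]
        module
    _ = (1 - star c * c) • (star b * b) := by rw [mul_smul_comm, mul_one, smul_mul_assoc]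

theorem KS.IsResolventFamily.smul_sub_one_mul_eq_one {H : Type*} [NormedAddCommGroup H]
    [InnerProductSpace ℂ H] [CompleteSpace H] {U : H ≃ₗᵢ[ℂ] H} {Res : ℂ → H →L[ℂ] H}
    (hRes : KS.IsResolventFamily U Res) {μ : ℂ} (hμ : μ.im ≠ 0) :
    (exp (-μ * I) • (U : H →L[ℂ] H) - 1) * Res μ = 1 := by
  ext φ
  exact (hRes μ hμ).1 φ

theorem star_exp_neg_mul_I_mul_exp_neg_mul_I (μ ν : ℂ) :
    star (exp (-μ * I)) * exp (-ν * I) = exp ((conj μ - ν) * I) := by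
  rw [star_def, ← exp_conj, ← exp_add]
  simp only [map_mul, map_neg, conj_I]
  ring_nf

open KS in
/-- **Lemma (resolvent difference identity and positivity).**
Let `U` be unitary on a Hilbert space `H`, `R(μ) = (Ue^{−iμ} − 1)⁻¹` for `Im μ ≠ 0`.
Then for `λ ∈ ℝ`, `ε ≠ 0`:
`R(λ+iε) − R(λ−iε) = (1 − e^{−2ε}) R(λ−iε)* R(λ−iε)`;
in particular for `ε > 0` the operator `R(λ+iε) − R(λ−iε)` is self-adjoint and nonnegative. -/
theorem resolvent_difference_identity
    {H : Type*} [NormedAddCommGroup H] [InnerProductSpace ℂ H] [CompleteSpace H]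
    (U : H ≃ₗᵢ[ℂ] H) (Res : ℂ → H →L[ℂ] H) (hRes : KS.IsResolventFamily U Res) :
    ∀ (l ε : ℝ), ε ≠ 0 →
      (Res ((l : ℂ) + (ε : ℂ) * Complex.I) - Res ((l : ℂ) - (ε : ℂ) * Complex.I) =
        (((1 - Real.exp (-2 * ε) : ℝ)) : ℂ) •
          (ContinuousLinearMap.adjoint (Res ((l : ℂ) - (ε : ℂ) * Complex.I)) ∘L
            Res ((l : ℂ) - (ε : ℂ) * Complex.I))) ∧
      (0 < ε →
        IsSelfAdjoint
          (Res ((l : ℂ) + (ε : ℂ) * Complex.I) - Res ((l : ℂ) - (ε : ℂ) * Complex.I)) ∧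
        ∀ φ : H, 0 ≤ (inner ℂ φ
          ((Res ((l : ℂ) + (ε : ℂ) * Complex.I) - Res ((l : ℂ) - (ε : ℂ) * Complex.I)) φ)
            : ℂ).re) := by
  intro l ε hε
  have hdiff : Res (l + ε * I) - Res (l - ε * I) = ((1 - Real.exp (-2 * ε) : ℝ) : ℂ) •
      (ContinuousLinearMap.adjoint (Res (l - ε * I)) ∘L Res (l - ε * I)) := by
    have hcd : star (exp (-(l - ε * I) * I)) * exp (-(l + ε * I) * I) = 1 := by
      rw [star_exp_neg_mul_I_mul_exp_neg_mul_I]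
      simp
    have hcc : star (exp (-(l - ε * I) * I)) * exp (-(l - ε * I) * I) = Real.exp (-2 * ε) := by
      rw [star_exp_neg_mul_I_mul_exp_neg_mul_I, ofReal_exp]
      congr 1
      simp only [map_sub, map_mul, conj_ofReal, conj_I]
      push_cast
      linear_combination (2 * ε : ℂ) * I_sq
    rw [ofReal_sub, ofReal_one, ← hcc]
    exact sub_eq_smul_star_mul_of_mul_eq_one U.toLinearIsometry.adjoint_comp_self hcd
      (hRes.smul_sub_one_mul_eq_one (μ := l + ε * I) (by simpa using hε))
      (hRes.smul_sub_one_mul_eq_one (μ := l - ε * I) (by simpa using hε))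
  refine ⟨hdiff, fun hεpos => ?_⟩
  have hcoeff : (0 : ℂ) ≤ ((1 - Real.exp (-2 * ε) : ℝ) : ℂ) :=
    zero_le_real.mpr (sub_nonneg.mpr (Real.exp_le_one_iff.mpr (by linarith)))
  have hpos : (Res (l + ε * I) - Res (l - ε * I)).IsPositive :=
    hdiff ▸ (ContinuousLinearMap.isPositive_adjoint_comp_self _).smul_of_nonneg hcoeff
  exact ⟨hpos.isSelfAdjoint, hpos.re_inner_nonneg_right⟩
end
end
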